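/- arXiv:2408.02300 — 7 statements merged into one kernel-verified Lean document; each statement's English description precedes it below -/
import Mathlib

section
/- For all sufficiently large integers k there exist an approval election E = (N, C, (A_v)_{v in N}, k) with at most 20k⁴ voters, a linear order < on C, and an initial committee W_0 ⊆ C with |W_0| = k such that 0⁺-ls-PAV with the lexicographic pivoting rule determined by <, started from W_0, performs at least (k/2)^{⌈log₂ k⌉} swaps before terminating. In particular, the number of iterations is Ω(k^{log k}). -/
/-- PAV score of committee `W` given approval ballots `A`. -/
def pavsc {V C : Type*} [Fintype V] [DecidableEq C]
    (A : V → Finset C) (W : Finset C) : ℚ :=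
  ∑ v : V, ∑ j ∈ Finset.range ((A v ∩ W).card), (1 : ℚ) / (j + 1)

/-- `Δ(W,a,b) = pavsc((W ∖ {a}) ∪ {b}) − pavsc(W)`. -/
def pavDelta {V C : Type*} [Fintype V] [DecidableEq C]
    (A : V → Finset C) (W : Finset C) (a b : C) : ℚ :=
  pavsc A (insert b (W.erase a)) - pavsc A W

/-- One swap: `W ↦ (W ∪ {b}) ∖ {a}`. -/
def swapStep {C : Type*} [DecidableEq C] (W : Finset C) (p : C × C) : Finset C :=
  (insert p.2 W).erase p.1

/-- The committee after the first `t` swaps. -/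
def committeeAt {C : Type*} [DecidableEq C] (W0 : Finset C) (swaps : List (C × C)) (t : ℕ) :
    Finset C :=
  (swaps.take t).foldl swapStep W0

/-- A sequence of swaps is valid: each `a_t ∈ W_{t-1}` and `b_t ∉ W_{t-1}`. -/
def ValidSwapSeq {C : Type*} [DecidableEq C] (W0 : Finset C) (swaps : List (C × C)) : Prop :=
  ∀ (t : ℕ) (ht : t < swaps.length),
    (swaps.get ⟨t, ht⟩).1 ∈ committeeAt W0 swaps t ∧
    (swaps.get ⟨t, ht⟩).2 ∉ committeeAt W0 swaps t

/-- `(a,b)` is the lexicographically smallest PAV-score-improving swap for `W` with respect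
to the strict linear order `lt` on candidates: among all pairs `(b',a')` with `b' ∉ W`,
`a' ∈ W` and `Δ(W,a',b') > 0`, the pair `(b,a)` first minimizes the incoming candidate `b`
and then the outgoing candidate `a`. -/
def IsLexMinImprovingSwap {V C : Type*} [Fintype V] [DecidableEq C]
    (lt : C → C → Prop) (A : V → Finset C) (W : Finset C) (a b : C) : Prop :=
  a ∈ W ∧ b ∉ W ∧ 0 < pavDelta A W a b ∧
  ∀ a' b', a' ∈ W → b' ∉ W → 0 < pavDelta A W a' b' →
    lt b b' ∨ (b = b' ∧ (lt a a' ∨ a = a'))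

namespace LB
open Finset

/-- primes up to `k` -/
def prim (k : ℕ) : Finset ℕ := (Finset.range (k+1)).filter Nat.Prime

/-- largest power of `p` that is `≤ k` (for `p` prime `≤ k`) -/
def PP (k p : ℕ) : ℕ := p ^ (Nat.log p k)

def tt (k p : ℕ) : ℕ := Nat.log 2 (PP k p)

def JJ (k : ℕ) : ℕ := ∑ p ∈ prim k, tt k p

lemma mem_prim {k p : ℕ} (hp : p ∈ prim k) : p.Prime ∧ p ≤ k := by
  simp only [prim, Finset.mem_filter, Finset.mem_range] at hp
  exact ⟨hp.2, by omega⟩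

lemma PP_le {k p : ℕ} (hk : 1 ≤ k) (hp : p.Prime) : PP k p ≤ k :=
  Nat.pow_log_le_self p (by omega)

lemma two_le_PP {k p : ℕ} (hkp : p ≤ k) (hp : p.Prime) : 2 ≤ PP k p := by
  have h1 : p ^ 1 ≤ PP k p := by
    apply Nat.pow_le_pow_right hp.pos
    exact Nat.log_pos hp.one_lt hkp
  have := hp.two_le
  calc 2 ≤ p := this
  _ = p ^ 1 := (pow_one p).symm
  _ ≤ PP k p := h1

lemma two_pow_tt_le {k p : ℕ} : 2 ^ tt k p ≤ PP k p ∨ PP k p = 0 := by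
  rcases Nat.eq_zero_or_pos (PP k p) with h | h
  · exact Or.inr h
  · exact Or.inl (Nat.pow_log_le_self 2 (by omega))

lemma two_pow_tt_le' {k p : ℕ} (hkp : p ≤ k) (hp : p.Prime) : 2 ^ tt k p ≤ PP k p := by
  rcases two_pow_tt_le (k := k) (p := p) with h | h
  · exact h
  · have := two_le_PP hkp hp; omega

lemma PP_lt_two_pow {k p : ℕ} : PP k p < 2 ^ (tt k p + 1) :=
  Nat.lt_pow_succ_log_self (by norm_num) _

end LB

namespace LB
open Finset

lemma card_odd_le (N : ℕ) : ((Finset.range N).filter (fun x => x % 2 = 1)).card ≤ (N+1)/2 := by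
  have h : ((Finset.range N).filter (fun x => x % 2 = 1)).card ≤ (Finset.range ((N+1)/2)).card := by
    apply Finset.card_le_card_of_injOn (fun x => x / 2)
    · intro x hx
      simp only [Finset.mem_coe, Finset.mem_filter, Finset.mem_range] at hx ⊢
      omega
    · intro x hx y hy hxy
      simp only [Finset.mem_coe, Finset.mem_filter, Finset.mem_range] at hx hy
      simp only at hxy
      omega
  simpa using h

lemma card_prim_le (k : ℕ) : (prim k).card ≤ (k+2)/2 + 1 := by
  have hsub : prim k ⊆ insert 2 ((Finset.range (k+1)).filter (fun x => x % 2 = 1)) := by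
    intro p hp
    obtain ⟨hp1, hp2⟩ := mem_prim hp
    rcases hp1.eq_two_or_odd with h | h
    · simp [h]
    · simp only [Finset.mem_insert, Finset.mem_filter, Finset.mem_range]
      exact Or.inr ⟨by omega, h⟩
  have h1 := Finset.card_le_card hsub
  have h2 := Finset.card_insert_le (2:ℕ) ((Finset.range (k+1)).filter (fun x => x % 2 = 1))
  have h3 := card_odd_le (k+1)
  omega

lemma centralBinom_le_prod (k : ℕ) (hk : 2 ≤ k) :
    Nat.centralBinom (k/2) ≤ ∏ p ∈ prim k, PP k p := by
  set n := k / 2 with hn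
  have hnpos : 0 < n := by omega
  set N := Nat.centralBinom n with hN
  have hN0 : N ≠ 0 := Nat.centralBinom_ne_zero n
  have hfact : N.factorization.prod (fun p e => p ^ e) = N :=
    Nat.factorization_prod_pow_eq_self hN0
  have hsupp : N.factorization.support ⊆ prim k := by
    intro p hp
    have hprime : p.Prime := Nat.prime_of_mem_primeFactors (by simpa using hp)
    have hple : p ^ N.factorization p ≤ 2 * n := by
      have := Nat.pow_factorization_choose_le (p := p) (n := 2*n) (k := n) (by omega)
      simpa [hN, Nat.centralBinom] using this
    have h1 : 1 ≤ N.factorization p := by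
      simp only [Finsupp.mem_support_iff] at hp; omega
    have : p ≤ 2 * n := le_trans (by simpa using Nat.pow_le_pow_right hprime.pos h1) hple
    simp only [prim, Finset.mem_filter, Finset.mem_range]
    exact ⟨by omega, hprime⟩
  have hterm : ∀ p ∈ N.factorization.support, p ^ N.factorization p ≤ PP k p := by
    intro p hp
    have hprime : p.Prime := Nat.prime_of_mem_primeFactors (by simpa using hp)
    have hple : p ^ N.factorization p ≤ 2 * n := by
      have := Nat.pow_factorization_choose_le (p := p) (n := 2*n) (k := n) (by omega)
      simpa [hN, Nat.centralBinom] using this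
    have hlek : p ^ N.factorization p ≤ k := le_trans hple (by omega)
    apply Nat.pow_le_pow_right hprime.pos
    exact (Nat.le_log_iff_pow_le hprime.one_lt (by omega)).2 hlek
  calc N = N.factorization.prod (fun p e => p ^ e) := hfact.symm
  _ = ∏ p ∈ N.factorization.support, p ^ N.factorization p := rfl
  _ ≤ ∏ p ∈ N.factorization.support, PP k p := Finset.prod_le_prod' hterm
  _ ≤ ∏ p ∈ prim k, PP k p := by
      apply Finset.prod_le_prod_of_subset_of_one_le' hsupp
      intro p hp _
      have := mem_prim hp
      have := two_le_PP this.2 this.1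
      omega

lemma prod_PP_le (k : ℕ) : ∏ p ∈ prim k, PP k p ≤ 2 ^ (JJ k + (prim k).card) := by
  calc ∏ p ∈ prim k, PP k p ≤ ∏ p ∈ prim k, 2 ^ (tt k p + 1) := by
        apply Finset.prod_le_prod'
        intro p _
        exact PP_lt_two_pow.le
  _ = 2 ^ (∑ p ∈ prim k, (tt k p + 1)) := Finset.prod_pow_eq_pow_sum _ _ _
  _ = 2 ^ (JJ k + (prim k).card) := by rw [Finset.sum_add_distrib]; simp [JJ]

lemma aux_sq (l : ℕ) (hl : 9 ≤ l) : (l+1)^2 + l + 8 ≤ 2^(l-1) := by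
  induction l with
  | zero => omega
  | succ n ih =>
    rcases Nat.lt_or_ge n 9 with h | h
    · interval_cases n <;> simp_all <;> norm_num
    · have h1 := ih (by omega)
      have h2 : n + 1 - 1 = (n - 1) + 1 := by omega
      have h3 : (2:ℕ)^((n-1)+1) = 2^(n-1)*2 := pow_succ 2 (n-1)
      rw [h2, h3]
      nlinarith

lemma JJ_ge (k : ℕ) (hk : 512 ≤ k) : (Nat.clog 2 k)^2 + 1 ≤ JJ k := by
  set l := Nat.log 2 k with hl
  have hl9 : 9 ≤ l := by
    have : 2 ^ 9 ≤ k := by norm_num; omega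
    exact (Nat.le_log_iff_pow_le (by norm_num) (by omega)).2 this
  have hc : Nat.clog 2 k ≤ l + 1 := by
    have h1 : 2 ^ (Nat.clog 2 k - 1) < k := Nat.pow_pred_clog_lt_self (by norm_num) (by omega)
    have h2 : Nat.clog 2 k - 1 ≤ l := (Nat.le_log_iff_pow_le (by norm_num) (by omega)).2 h1.le
    have h3 : 0 < Nat.clog 2 k := Nat.clog_pos (by norm_num) (by omega)
    omega
  have h2l : 2 ^ l ≤ k := Nat.pow_log_le_self 2 (by omega)
  -- main chain
  have hchain : 2 ^ (k - 1) ≤ 2 ^ ((l + 1) + (JJ k + ((k+2)/2 + 1))) := by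
    calc 2 ^ (k-1) ≤ 4 ^ (k/2) := by
          rw [show (4:ℕ) = 2^2 by norm_num, ← pow_mul]
          exact Nat.pow_le_pow_right (by norm_num) (by omega)
    _ ≤ 2 * (k/2) * Nat.centralBinom (k/2) :=
          Nat.four_pow_le_two_mul_self_mul_centralBinom _ (by omega)
    _ ≤ k * Nat.centralBinom (k/2) := by
          apply Nat.mul_le_mul_right
          omega
    _ ≤ k * ∏ p ∈ prim k, PP k p := by
          apply Nat.mul_le_mul_left
          exact centralBinom_le_prod k (by omega)
    _ ≤ k * 2 ^ (JJ k + (prim k).card) := Nat.mul_le_mul_left _ (prod_PP_le k)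
    _ ≤ 2 ^ (l+1) * 2 ^ (JJ k + (prim k).card) := by
          apply Nat.mul_le_mul_right
          have : k < 2 ^ (l+1) := Nat.lt_pow_succ_log_self (by norm_num) k
          omega
    _ ≤ 2 ^ (l+1) * 2 ^ (JJ k + ((k+2)/2 + 1)) := by
          apply Nat.mul_le_mul_left
          apply Nat.pow_le_pow_right (by norm_num)
          have := card_prim_le k
          omega
    _ = 2 ^ ((l + 1) + (JJ k + ((k+2)/2 + 1))) := by rw [← pow_add]
  have hexp : k - 1 ≤ (l + 1) + (JJ k + ((k+2)/2 + 1)) :=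
    (Nat.pow_le_pow_iff_right (by norm_num)).1 hchain
  -- conclude
  have hsq : (l+1)^2 + l + 8 ≤ 2^(l-1) := aux_sq l hl9
  have h2l1 : 2 ^ (l-1) ≤ (k+1)/2 := by
    have : 2 ^ (l - 1) * 2 ≤ k := by
      calc 2 ^ (l-1) * 2 = 2 ^ l := by rw [← pow_succ]; congr 1; omega
      _ ≤ k := h2l
    omega
  have hfin : (Nat.clog 2 k)^2 + 1 ≤ (l+1)^2 + 1 := by
    apply Nat.add_le_add_right
    exact Nat.pow_le_pow_left hc 2
  -- k - 1 ≥ stuff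
  omega

end LB

namespace LB
open Finset


/-- digit vectors -/
def DV (k : ℕ) : Type := (p : (prim k : Finset ℕ)) → Fin (2 ^ tt k p.1)

instance (k : ℕ) : Fintype (DV k) := by unfold DV; infer_instance
instance (k : ℕ) : DecidableEq (DV k) := by unfold DV; infer_instance

lemma card_DV (k : ℕ) : Fintype.card (DV k) = 2 ^ JJ k := by
  unfold DV
  rw [Fintype.card_pi]
  calc (∏ p : (prim k : Finset ℕ), Fintype.card (Fin (2 ^ tt k p.1)))
      = ∏ p : (prim k : Finset ℕ), 2 ^ tt k p.1 := by simp
  _ = ∏ p ∈ prim k, 2 ^ tt k p := Finset.prod_coe_sort (prim k) (fun p => 2 ^ tt k p)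
  _ = 2 ^ JJ k := Finset.prod_pow_eq_pow_sum _ _ _

/-- value of a digit vector -/
def val (k : ℕ) (d : DV k) : ℚ :=
  ∑ p ∈ (prim k).attach, (d p : ℚ) / (PP k p.1)

/-- cofactor -/
def CF (k : ℕ) (p : (prim k : Finset ℕ)) : ℕ :=
  ∏ q ∈ (prim k).attach.erase p, PP k q.1

lemma CF_mul (k : ℕ) (p : (prim k : Finset ℕ)) :
    CF k p * PP k p.1 = ∏ q ∈ (prim k).attach, PP k q.1 :=
  Finset.prod_erase_mul _ _ (Finset.mem_attach _ p)

lemma val_inj (k : ℕ) : Function.Injective (val k) := by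
  intro d d' h
  by_contra hne
  obtain ⟨p₀, hp₀⟩ := Function.ne_iff.1 hne
  have hp₀p := mem_prim p₀.2
  set S := (prim k).attach with hS
  set Q : ℕ := ∏ q ∈ S, PP k q.1 with hQ
  have hPPpos : ∀ p : (prim k : Finset ℕ), 0 < PP k p.1 := fun p => by
    have := mem_prim p.2; have := two_le_PP this.2 this.1; omega
  -- integer equation
  set T : ℤ := ∑ p ∈ S, (((d p : ℕ) : ℤ) - ((d' p : ℕ) : ℤ)) * CF k p with hT
  have hTzero : T = 0 := by
    have hcast : (T : ℚ) = (val k d - val k d') * Q := by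
      rw [hT]
      push_cast
      rw [val, val, ← Finset.sum_sub_distrib, Finset.sum_mul]
      apply Finset.sum_congr rfl
      intro p hp
      have hPne : ((PP k p.1 : ℚ)) ≠ 0 := by
        exact_mod_cast (hPPpos p).ne'
      have : (Q : ℚ) = (CF k p : ℚ) * (PP k p.1 : ℚ) := by
        rw [hQ, ← CF_mul k p]; push_cast; ring
      rw [this]
      field_simp
    have : (T : ℚ) = 0 := by rw [hcast, h]; ring
    exact_mod_cast this
  -- divisibility of other terms
  have hdvd_other : ∀ p ∈ S.erase p₀, (PP k p₀.1 : ℤ) ∣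
      (((d p : ℕ) : ℤ) - ((d' p : ℕ) : ℤ)) * CF k p := by
    intro p hp
    apply Dvd.dvd.mul_left
    have hmem : p₀ ∈ S.erase p := by
      simp only [Finset.mem_erase] at hp ⊢
      exact ⟨fun hh => hp.1 hh.symm, Finset.mem_attach _ _⟩
    have : (PP k p₀.1 : ℕ) ∣ CF k p := Finset.dvd_prod_of_mem _ hmem
    exact_mod_cast this
  have hsum_split : T = (((d p₀ : ℕ) : ℤ) - ((d' p₀ : ℕ) : ℤ)) * CF k p₀ +
      ∑ p ∈ S.erase p₀, (((d p : ℕ) : ℤ) - ((d' p : ℕ) : ℤ)) * CF k p := by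
    rw [hT]
    exact (Finset.add_sum_erase _ (fun p => (((d p : ℕ) : ℤ) - ((d' p : ℕ) : ℤ)) * CF k p)
      (Finset.mem_attach _ p₀)).symm
  have hdvd0 : (PP k p₀.1 : ℤ) ∣ (((d p₀ : ℕ) : ℤ) - ((d' p₀ : ℕ) : ℤ)) * CF k p₀ := by
    have h2 : (PP k p₀.1 : ℤ) ∣ ∑ p ∈ S.erase p₀,
        (((d p : ℕ) : ℤ) - ((d' p : ℕ) : ℤ)) * CF k p :=
      Finset.dvd_sum hdvd_other
    have h3 : (((d p₀ : ℕ) : ℤ) - ((d' p₀ : ℕ) : ℤ)) * CF k p₀ =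
        - ∑ p ∈ S.erase p₀, (((d p : ℕ) : ℤ) - ((d' p : ℕ) : ℤ)) * CF k p := by
      have h4 := hsum_split
      rw [hTzero] at h4
      linarith
    rw [h3]
    exact dvd_neg.mpr h2
  -- coprimality
  have hcop : IsCoprime ((PP k p₀.1 : ℤ)) ((CF k p₀ : ℤ)) := by
    rw [Int.ofNat_inj.symm.mp rfl] -- no-op to keep structure
    apply Nat.Coprime.isCoprime
    apply Nat.Coprime.prod_right
    intro q hq
    have hqne : q.1 ≠ p₀.1 := by
      intro hh
      exact (Finset.mem_erase.1 hq).1 (Subtype.ext hh.symm).symm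
    have hqp := mem_prim q.2
    exact Nat.Coprime.pow _ _ ((Nat.coprime_primes hp₀p.1 hqp.1).2 (fun hh => hqne hh.symm))
  have hdvdδ : (PP k p₀.1 : ℤ) ∣ (((d p₀ : ℕ) : ℤ) - ((d' p₀ : ℕ) : ℤ)) :=
    hcop.dvd_of_dvd_mul_right hdvd0
  have habs : |(((d p₀ : ℕ) : ℤ) - ((d' p₀ : ℕ) : ℤ))| < (PP k p₀.1 : ℤ) := by
    have h1 : (d p₀ : ℕ) < 2 ^ tt k p₀.1 := (d p₀).2
    have h2 : (d' p₀ : ℕ) < 2 ^ tt k p₀.1 := (d' p₀).2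
    have h3 : 2 ^ tt k p₀.1 ≤ PP k p₀.1 := two_pow_tt_le' hp₀p.2 hp₀p.1
    have h4 : ((d p₀ : ℕ) : ℤ) < (PP k p₀.1 : ℤ) := by exact_mod_cast lt_of_lt_of_le h1 h3
    have h5 : ((d' p₀ : ℕ) : ℤ) < (PP k p₀.1 : ℤ) := by exact_mod_cast lt_of_lt_of_le h2 h3
    have h6 : (0:ℤ) ≤ ((d p₀ : ℕ) : ℤ) := by positivity
    have h7 : (0:ℤ) ≤ ((d' p₀ : ℕ) : ℤ) := by positivity
    rw [abs_lt]
    omega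
  have := Int.eq_zero_of_abs_lt_dvd hdvdδ habs
  apply hp₀
  have : (d p₀ : ℕ) = (d' p₀ : ℕ) := by omega
  exact Fin.ext this


end LB

-- Part C: structural definitions
namespace LB
open Finset

attribute [local instance] Classical.propDecidable

noncomputable instance (k : ℕ) : LinearOrder (DV k) := LinearOrder.lift' (val k) (val_inj k)

lemma DV_le_iff {k : ℕ} (a b : DV k) : a ≤ b ↔ val k a ≤ val k b := Iff.rfl

lemma DV_lt_iff {k : ℕ} (a b : DV k) : a < b ↔ val k a < val k b := by
  rw [lt_iff_le_not_ge, DV_le_iff, DV_le_iff, ← lt_iff_le_not_ge]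

noncomputable def ee (k : ℕ) : Fin (2 ^ JJ k) ≃o DV k := monoEquivOfFin (DV k) (card_DV k)

def RR (k : ℕ) : ℕ := 2 ^ JJ k

noncomputable def valv (k : ℕ) (v : Fin (RR k)) : ℚ := val k (ee k v)

lemma valv_strictMono (k : ℕ) : StrictMono (valv k) := by
  intro v w h
  rw [valv, valv, ← DV_lt_iff]
  exact (ee k).strictMono h

def mm (k : ℕ) : ℕ := RR k + (k - 1)

def gc (k : ℕ) (v : Fin (RR k)) : Fin (mm k) := Fin.castAdd (k-1) v

def fc (k : ℕ) (f : Fin (k-1)) : Fin (mm k) := Fin.natAdd (RR k) f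

def FF (k : ℕ) : Finset (Fin (mm k)) := Finset.univ.image (fc k)

noncomputable def Wv (k : ℕ) (v : Fin (RR k)) : Finset (Fin (mm k)) := insert (gc k v) (FF k)

noncomputable def dgt {k : ℕ} (v : Fin (RR k)) (p : ℕ) : ℕ :=
  if h : p ∈ prim k then ((ee k v) ⟨p, h⟩ : ℕ) else 0

noncomputable def BB (k : ℕ) (p j : ℕ) : Finset (Fin (mm k)) :=
  Finset.univ.filter (fun x => (RR k ≤ x.1 ∧ x.1 - RR k < PP k p - 1) ∨
    (∃ h : x.1 < RR k, j < dgt (⟨x.1, h⟩ : Fin (RR k)) p))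

abbrev VI (k : ℕ) : Type := (Fin (k+1) × Fin k) ⊕ (Fin (k-1) × Fin (k^2))

noncomputable def Abal (k : ℕ) : VI k → Finset (Fin (mm k))
  | Sum.inl x => if ((x.1 : ℕ).Prime ∧ (x.2 : ℕ) < 2 ^ tt k x.1) then BB k x.1 x.2 else ∅
  | Sum.inr x => {fc k x.1}

def nn (k : ℕ) : ℕ := (k+1) * k + (k-1) * k^2

def code (k : ℕ) : VI k ≃ Fin (nn k) :=
  (Equiv.sumCongr finProdFinEquiv finProdFinEquiv).trans finSumFinEquiv

noncomputable def AA (k : ℕ) : Fin (nn k) → Finset (Fin (mm k)) :=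
  fun i => Abal k ((code k).symm i)

noncomputable def swapsL (k : ℕ) : List (Fin (mm k) × Fin (mm k)) :=
  (List.finRange (RR k - 1)).map
    (fun t => (gc k ⟨t.1, by have := t.2; omega⟩, gc k ⟨t.1+1, by have := t.2; omega⟩))

-- basic membership facts
lemma gc_lt {k : ℕ} (v : Fin (RR k)) : (gc k v).1 < RR k := v.2

lemma fc_ge {k : ℕ} (f : Fin (k-1)) : RR k ≤ (fc k f).1 := Nat.le_add_right _ _

lemma mem_FF {k : ℕ} (x : Fin (mm k)) : x ∈ FF k ↔ RR k ≤ x.1 := by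
  constructor
  · intro h
    obtain ⟨f, _, rfl⟩ := Finset.mem_image.1 h
    exact fc_ge f
  · intro h
    have hx : x.1 - RR k < k - 1 := by have := x.2; unfold mm at this; omega
    refine Finset.mem_image.2 ⟨⟨x.1 - RR k, hx⟩, Finset.mem_univ _, ?_⟩
    apply Fin.ext
    simp only [fc, Fin.natAdd]
    omega

lemma gc_not_mem_FF {k : ℕ} (v : Fin (RR k)) : gc k v ∉ FF k := by
  rw [mem_FF]; have := gc_lt v; omega

lemma mem_Wv {k : ℕ} (x : Fin (mm k)) (v : Fin (RR k)) :
    x ∈ Wv k v ↔ x = gc k v ∨ RR k ≤ x.1 := by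
  simp [Wv, mem_FF]

lemma gc_inj {k : ℕ} : Function.Injective (gc k) := fun a b h => by
  have h2 : (gc k a).1 = (gc k b).1 := congrArg Fin.val h
  apply Fin.ext
  simpa [gc, Fin.castAdd, Fin.castLE] using h2

lemma fc_inj {k : ℕ} : Function.Injective (fc k) := fun a b h => by
  apply Fin.ext
  have := congrArg Fin.val h
  simp only [fc, Fin.natAdd] at this
  omega

lemma card_FF (k : ℕ) : (FF k).card = k - 1 := by
  rw [FF, Finset.card_image_of_injective _ fc_inj, Finset.card_univ, Fintype.card_fin]

lemma card_Wv (k : ℕ) (hk : 1 ≤ k) (v : Fin (RR k)) : (Wv k v).card = k := by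
  rw [Wv, Finset.card_insert_of_notMem (gc_not_mem_FF v), card_FF]
  omega

lemma gc_mem_Wv {k : ℕ} (v : Fin (RR k)) : gc k v ∈ Wv k v := Finset.mem_insert_self _ _

lemma gc_not_mem_Wv {k : ℕ} {v w : Fin (RR k)} (h : w ≠ v) : gc k w ∉ Wv k v := by
  rw [mem_Wv]
  push_neg
  exact ⟨fun hh => h (gc_inj hh), by have := gc_lt w; omega⟩

lemma not_mem_Wv_iff {k : ℕ} (x : Fin (mm k)) (v : Fin (RR k)) :
    x ∉ Wv k v ↔ ∃ w : Fin (RR k), w ≠ v ∧ x = gc k w := by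
  rw [mem_Wv]
  constructor
  · intro h
    push_neg at h
    have hxlt : x.1 < RR k := by omega
    refine ⟨⟨x.1, hxlt⟩, ?_, ?_⟩
    · intro hh
      apply h.1
      apply Fin.ext
      have := congrArg Fin.val (congrArg (gc k) hh)
      simpa [gc, Fin.castAdd, Fin.castLE] using this
    · apply Fin.ext; rfl
  · rintro ⟨w, hw, rfl⟩
    push_neg
    exact ⟨fun hh => hw (gc_inj hh), by have := gc_lt w; omega⟩

end LB

-- Part D: pavsc computations
namespace LB
open Finset

attribute [local instance] Classical.propDecidable

noncomputable def hsum (c : ℕ) : ℚ := ∑ j ∈ Finset.range c, (1 : ℚ) / (j + 1)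

lemma hsum_succ (c : ℕ) : hsum (c+1) = hsum c + 1 / ((c:ℚ) + 1) := by
  rw [hsum, hsum, Finset.sum_range_succ]

lemma hsum_mono : Monotone hsum := by
  intro a b h
  apply Finset.sum_le_sum_of_subset_of_nonneg (Finset.range_subset_range.2 h)
  intro i _ _
  positivity

@[simp] lemma hsum_zero : hsum 0 = 0 := by simp [hsum]

lemma hsum_one : hsum 1 = 1 := by norm_num [hsum]

lemma pavsc_VI (k : ℕ) (W : Finset (Fin (mm k))) :
    pavsc (AA k) W = ∑ x : VI k, hsum ((Abal k x ∩ W).card) := by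
  have h0 : pavsc (AA k) W = ∑ i : Fin (nn k), hsum ((AA k i ∩ W).card) := rfl
  rw [h0, ← Equiv.sum_comp ((code k).symm) (fun x => hsum ((Abal k x ∩ W).card))]
  rfl

lemma sum_fin_ind (N d : ℕ) (hd : d ≤ N) (x : ℚ) :
    (∑ j : Fin N, if (j:ℕ) < d then x else 0) = d * x := by
  rw [Fin.sum_univ_eq_sum_range (fun j => if j < d then x else 0) N]
  rw [Finset.sum_ite, Finset.sum_const_zero, add_zero, Finset.sum_const]
  have : (Finset.range N).filter (fun j => j < d) = Finset.range d := by
    ext j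
    simp only [Finset.mem_filter, Finset.mem_range]
    omega
  rw [this, Finset.card_range, nsmul_eq_mul]

-- anchor finset
noncomputable def AnchorF (k p : ℕ) : Finset (Fin (mm k)) :=
  Finset.univ.filter (fun x => RR k ≤ x.1 ∧ x.1 - RR k < PP k p - 1)

lemma card_AnchorF {k p : ℕ} (hk : 1 ≤ k) (hp : p.Prime) (hpk : p ≤ k) :
    (AnchorF k p).card = PP k p - 1 := by
  have hPP : PP k p ≤ k := PP_le hk hp
  have h2 : 2 ≤ PP k p := two_le_PP hpk hp
  have hle : PP k p - 1 ≤ k - 1 := by omega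
  have himg : AnchorF k p =
      Finset.univ.image (fun i : Fin (PP k p - 1) => fc k (Fin.castLE hle i)) := by
    ext x
    simp only [AnchorF, Finset.mem_filter, Finset.mem_univ, true_and, Finset.mem_image]
    constructor
    · rintro ⟨h1, h2'⟩
      refine ⟨⟨x.1 - RR k, by omega⟩, ?_⟩
      apply Fin.ext
      simp only [fc, Fin.natAdd, Fin.castLE]
      omega
    · rintro ⟨i, rfl⟩
      have := i.2
      simp only [fc, Fin.natAdd, Fin.castLE]
      omega
  rw [himg, Finset.card_image_of_injective _ (fun a b h => by
    have := congrArg Fin.val h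
    simp only [fc, Fin.natAdd, Fin.castLE] at this
    exact Fin.ext (by omega))]
  simp

lemma gc_not_mem_AnchorF {k p : ℕ} (v : Fin (RR k)) : gc k v ∉ AnchorF k p := by
  simp only [AnchorF, Finset.mem_filter, Finset.mem_univ, true_and]
  have := gc_lt v
  omega

lemma BB_inter_Wv {k : ℕ} {p : ℕ} (j : ℕ) (v : Fin (RR k)) :
    BB k p j ∩ Wv k v =
      if j < dgt v p then insert (gc k v) (AnchorF k p) else AnchorF k p := by
  ext x
  by_cases hx : (x : Fin (mm k)).1 < RR k
  · -- x is a group candidate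
    have hxW : x ∈ Wv k v ↔ x = gc k v := by
      rw [mem_Wv]
      constructor
      · rintro (h | h)
        · exact h
        · omega
      · exact fun h => Or.inl h
    have hxB : x ∈ BB k p j ↔ j < dgt (⟨x.1, hx⟩ : Fin (RR k)) p := by
      simp only [BB, Finset.mem_filter, Finset.mem_univ, true_and]
      constructor
      · rintro (h | ⟨h1, h2⟩)
        · omega
        · exact h2
      · exact fun h => Or.inr ⟨hx, h⟩
    have hxA : x ∉ AnchorF k p := by
      simp only [AnchorF, Finset.mem_filter, Finset.mem_univ, true_and]; omega
    have hdgt : ∀ (h2 : x = gc k v), dgt (⟨x.1, hx⟩ : Fin (RR k)) p = dgt v p := by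
      intro h2
      have hval : x.1 = (gc k v).1 := congrArg Fin.val h2
      have hv : (⟨x.1, hx⟩ : Fin (RR k)) = v := by
        apply Fin.ext
        simpa [gc, Fin.castAdd, Fin.castLE] using hval
      rw [hv]
    rw [Finset.mem_inter, hxB, hxW]
    by_cases hj : j < dgt v p
    · rw [if_pos hj]
      simp only [Finset.mem_insert]
      constructor
      · rintro ⟨h1, h2⟩
        exact Or.inl h2
      · rintro (h | h)
        · refine ⟨?_, h⟩
          rw [hdgt h]
          exact hj
        · exact absurd h hxA
    · rw [if_neg hj]
      constructor
      · rintro ⟨h1, h2⟩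
        rw [hdgt h2] at h1
        exact absurd h1 hj
      · intro h
        exact absurd h hxA
  · -- x is a filler
    push_neg at hx
    have hxW : x ∈ Wv k v := (mem_Wv x v).2 (Or.inr hx)
    have hxg : x ≠ gc k v := by
      intro h
      rw [h] at hx
      have := gc_lt v
      omega
    have hxB : x ∈ BB k p j ↔ x.1 - RR k < PP k p - 1 := by
      simp only [BB, Finset.mem_filter, Finset.mem_univ, true_and]
      constructor
      · rintro (h | ⟨h1, _⟩)
        · exact h.2
        · omega
      · exact fun h => Or.inl ⟨hx, h⟩
    have hxA : x ∈ AnchorF k p ↔ x.1 - RR k < PP k p - 1 := by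
      simp only [AnchorF, Finset.mem_filter, Finset.mem_univ, true_and]
      exact ⟨fun h => h.2, fun h => ⟨hx, h⟩⟩
    rw [Finset.mem_inter, hxB]
    by_cases hj : j < dgt v p
    · rw [if_pos hj]
      simp only [Finset.mem_insert, hxA]
      constructor
      · rintro ⟨h1, _⟩
        exact Or.inr h1
      · rintro (h | h)
        · exact absurd h hxg
        · exact ⟨h, hxW⟩
    · rw [if_neg hj, hxA]
      exact ⟨fun h => h.1, fun h => ⟨h, hxW⟩⟩

lemma card_BB_inter_Wv {k : ℕ} (hk : 1 ≤ k) {p : ℕ} (hp : p.Prime) (hpk : p ≤ k)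
    (j : ℕ) (v : Fin (RR k)) :
    (BB k p j ∩ Wv k v).card = (PP k p - 1) + (if j < dgt v p then 1 else 0) := by
  rw [BB_inter_Wv]
  by_cases hj : j < dgt v p
  · rw [if_pos hj, if_pos hj, Finset.card_insert_of_notMem (gc_not_mem_AnchorF v),
      card_AnchorF hk hp hpk]
  · rw [if_neg hj, if_neg hj, card_AnchorF hk hp hpk]
    omega

lemma fc_mem_Wv {k : ℕ} (f : Fin (k-1)) (v : Fin (RR k)) : fc k f ∈ Wv k v :=
  (mem_Wv _ v).2 (Or.inr (fc_ge f))

lemma card_fc_inter_Wv {k : ℕ} (f : Fin (k-1)) (v : Fin (RR k)) :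
    (({fc k f} : Finset (Fin (mm k))) ∩ Wv k v).card = 1 := by
  rw [Finset.singleton_inter_of_mem (fc_mem_Wv f v), Finset.card_singleton]

end LB

-- Part E: closed form of pavsc on path committees
namespace LB
open Finset

attribute [local instance] Classical.propDecidable

lemma dgt_lt {k : ℕ} (v : Fin (RR k)) {p : ℕ} (hp : p ∈ prim k) :
    dgt v p < 2 ^ tt k p := by
  rw [dgt, dif_pos hp]
  exact (ee k v ⟨p, hp⟩).2

noncomputable def Cst (k : ℕ) : ℚ :=
  (∑ a : Fin (k+1), ∑ j : Fin k,
     (if ((a:ℕ).Prime ∧ (j:ℕ) < 2 ^ tt k (a:ℕ)) then hsum (PP k (a:ℕ) - 1) else 0))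
  + (((k-1) * k^2 : ℕ) : ℚ)

lemma valv_eq_sum (k : ℕ) (v : Fin (RR k)) :
    valv k v = ∑ a : Fin (k+1),
      (if ((a:ℕ)).Prime then (dgt v (a:ℕ) : ℚ) / (PP k (a:ℕ)) else 0) := by
  have h1 : valv k v = ∑ p ∈ (prim k).attach, (dgt v p.1 : ℚ) / (PP k p.1) := by
    rw [valv, val]
    apply Finset.sum_congr rfl
    intro p _
    congr 2
    rw [dgt, dif_pos p.2]
  rw [h1, Finset.sum_attach (prim k) (fun p => (dgt v p : ℚ) / (PP k p))]
  rw [prim, Finset.sum_filter]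
  exact (Fin.sum_univ_eq_sum_range
    (fun a => if (a).Prime then (dgt v a : ℚ) / (PP k a) else 0) (k+1)).symm

lemma pavsc_Wv (k : ℕ) (hk : 1 ≤ k) (v : Fin (RR k)) :
    pavsc (AA k) (Wv k v) = Cst k + valv k v := by
  rw [pavsc_VI, Fintype.sum_sum_type]
  have hinr : (∑ x : Fin (k-1) × Fin (k^2),
      hsum ((Abal k (Sum.inr x) ∩ Wv k v).card)) = (((k-1) * k^2 : ℕ) : ℚ) := by
    rw [Fintype.sum_prod_type]
    have : ∀ f : Fin (k-1), ∀ i : Fin (k^2),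
        hsum ((Abal k (Sum.inr (f, i)) ∩ Wv k v).card) = 1 := by
      intro f i
      show hsum ((({fc k f} : Finset (Fin (mm k))) ∩ Wv k v).card) = 1
      rw [card_fc_inter_Wv, hsum_one]
    calc (∑ f : Fin (k-1), ∑ i : Fin (k^2),
            hsum ((Abal k (Sum.inr (f, i)) ∩ Wv k v).card))
        = ∑ f : Fin (k-1), ∑ i : Fin (k^2), (1:ℚ) := by
          apply Finset.sum_congr rfl
          intro f _
          apply Finset.sum_congr rfl
          intro i _
          exact this f i
    _ = (((k-1) * k^2 : ℕ) : ℚ) := by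
          simp [Finset.sum_const, Finset.card_univ, mul_comm]
  have hinl : (∑ x : Fin (k+1) × Fin k,
      hsum ((Abal k (Sum.inl x) ∩ Wv k v).card)) =
      (∑ a : Fin (k+1), ∑ j : Fin k,
        (if ((a:ℕ).Prime ∧ (j:ℕ) < 2 ^ tt k (a:ℕ)) then hsum (PP k (a:ℕ) - 1) else 0))
      + valv k v := by
    rw [Fintype.sum_prod_type]
    have hpoint : ∀ (a : Fin (k+1)) (j : Fin k),
        hsum ((Abal k (Sum.inl (a, j)) ∩ Wv k v).card) =
        (if ((a:ℕ).Prime ∧ (j:ℕ) < 2 ^ tt k (a:ℕ)) then hsum (PP k (a:ℕ) - 1) else 0)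
        + (if ((a:ℕ).Prime ∧ (j:ℕ) < dgt v (a:ℕ)) then (1:ℚ) / (PP k (a:ℕ)) else 0) := by
      intro a j
      by_cases hv : ((a:ℕ).Prime ∧ (j:ℕ) < 2 ^ tt k (a:ℕ))
      · have hak : (a:ℕ) ≤ k := by have := a.2; omega
        have hprim : (a:ℕ) ∈ prim k := by
          simp only [prim, Finset.mem_filter, Finset.mem_range]
          exact ⟨by omega, hv.1⟩
        have hcard := card_BB_inter_Wv hk hv.1 hak (j:ℕ) v
        have h2 : 2 ≤ PP k (a:ℕ) := two_le_PP hak hv.1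
        have hAbal : Abal k (Sum.inl (a, j)) = BB k (a:ℕ) (j:ℕ) := by
          show (if ((a:ℕ).Prime ∧ (j:ℕ) < 2 ^ tt k (a:ℕ)) then _ else _) = _
          rw [if_pos hv]
        rw [hAbal, hcard, if_pos hv]
        by_cases hj : (j:ℕ) < dgt v (a:ℕ)
        · rw [if_pos hj, if_pos ⟨hv.1, hj⟩]
          have hPP1 : (PP k (a:ℕ) - 1) + 1 = PP k (a:ℕ) := by omega
          rw [show (PP k (a:ℕ) - 1) + 1 = (PP k (a:ℕ) - 1) + 1 from rfl, hsum_succ]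
          congr 1
          rw [show ((PP k (a:ℕ) - 1 : ℕ) : ℚ) + 1 = ((PP k (a:ℕ) : ℕ) : ℚ) by
            push_cast [Nat.cast_sub (by omega : 1 ≤ PP k (a:ℕ))]; ring]
        · rw [if_neg hj, add_zero,
            if_neg (fun hc : ((a:ℕ).Prime ∧ (j:ℕ) < dgt v (a:ℕ)) => hj hc.2), add_zero]
      · have hAbal : Abal k (Sum.inl (a, j)) = ∅ := by
          show (if ((a:ℕ).Prime ∧ (j:ℕ) < 2 ^ tt k (a:ℕ)) then _ else _) = _
          rw [if_neg hv]
        have hsec : ¬ ((a:ℕ).Prime ∧ (j:ℕ) < dgt v (a:ℕ)) := by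
          intro hc
          apply hv
          refine ⟨hc.1, lt_trans hc.2 (dgt_lt v ?_)⟩
          simp only [prim, Finset.mem_filter, Finset.mem_range]
          exact ⟨by have := a.2; omega, hc.1⟩
        rw [hAbal, if_neg hv, if_neg hsec]
        simp
    calc (∑ a : Fin (k+1), ∑ j : Fin k, hsum ((Abal k (Sum.inl (a, j)) ∩ Wv k v).card))
        = ∑ a : Fin (k+1), ∑ j : Fin k,
          ((if ((a:ℕ).Prime ∧ (j:ℕ) < 2 ^ tt k (a:ℕ)) then hsum (PP k (a:ℕ) - 1) else 0)
          + (if ((a:ℕ).Prime ∧ (j:ℕ) < dgt v (a:ℕ)) then (1:ℚ) / (PP k (a:ℕ)) else 0)) := by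
          apply Finset.sum_congr rfl
          intro a _
          apply Finset.sum_congr rfl
          intro j _
          exact hpoint a j
    _ = (∑ a : Fin (k+1), ∑ j : Fin k,
          (if ((a:ℕ).Prime ∧ (j:ℕ) < 2 ^ tt k (a:ℕ)) then hsum (PP k (a:ℕ) - 1) else 0))
        + ∑ a : Fin (k+1), ∑ j : Fin k,
          (if ((a:ℕ).Prime ∧ (j:ℕ) < dgt v (a:ℕ)) then (1:ℚ) / (PP k (a:ℕ)) else 0) := by
          rw [← Finset.sum_add_distrib]
          apply Finset.sum_congr rfl
          intro a _
          rw [← Finset.sum_add_distrib]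
    _ = (∑ a : Fin (k+1), ∑ j : Fin k,
          (if ((a:ℕ).Prime ∧ (j:ℕ) < 2 ^ tt k (a:ℕ)) then hsum (PP k (a:ℕ) - 1) else 0))
        + valv k v := by
          congr 1
          rw [valv_eq_sum]
          apply Finset.sum_congr rfl
          intro a _
          by_cases hp : (a:ℕ).Prime
          · have hak : (a:ℕ) ≤ k := by have := a.2; omega
            have hprim : (a:ℕ) ∈ prim k := by
              simp only [prim, Finset.mem_filter, Finset.mem_range]
              exact ⟨by omega, hp⟩
            have hdle : dgt v (a:ℕ) ≤ k := by
              have h1 := dgt_lt v hprim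
              have h2 := two_pow_tt_le' hak hp
              have h3 := PP_le hk hp
              omega
            calc (∑ j : Fin k,
                  (if ((a:ℕ).Prime ∧ (j:ℕ) < dgt v (a:ℕ)) then (1:ℚ) / (PP k (a:ℕ)) else 0))
                = ∑ j : Fin k, (if ((j:ℕ) < dgt v (a:ℕ)) then (1:ℚ) / (PP k (a:ℕ)) else 0) := by
                  apply Finset.sum_congr rfl
                  intro j _
                  by_cases hj : (j:ℕ) < dgt v (a:ℕ)
                  · rw [if_pos hj, if_pos ⟨hp, hj⟩]
                  · rw [if_neg hj, if_neg (fun hc => hj (hc.2))]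
            _ = (dgt v (a:ℕ) : ℚ) * ((1:ℚ) / (PP k (a:ℕ))) := sum_fin_ind k _ hdle _
            _ = (if (a:ℕ).Prime then (dgt v (a:ℕ) : ℚ) / (PP k (a:ℕ)) else 0) := by
                  rw [if_pos hp]
                  ring
          · rw [if_neg hp]
            apply Finset.sum_eq_zero
            intro j _
            rw [if_neg (fun hc : ((a:ℕ).Prime ∧ _) => hp hc.1)]
  rw [hinl, hinr, Cst]
  ring

lemma pavsc_Wv_diff (k : ℕ) (hk : 1 ≤ k) (v w : Fin (RR k)) :
    pavsc (AA k) (Wv k w) - pavsc (AA k) (Wv k v) = valv k w - valv k v := by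
  rw [pavsc_Wv k hk, pavsc_Wv k hk]
  ring

end LB

-- Part F: swap deltas
namespace LB
open Finset

attribute [local instance] Classical.propDecidable

lemma erase_Wv (k : ℕ) (v : Fin (RR k)) : (Wv k v).erase (gc k v) = FF k := by
  rw [Wv, Finset.erase_insert (gc_not_mem_FF v)]

lemma delta_group (k : ℕ) (hk : 1 ≤ k) (v w : Fin (RR k)) :
    pavDelta (AA k) (Wv k v) (gc k v) (gc k w) = valv k w - valv k v := by
  rw [pavDelta, erase_Wv]
  have h : insert (gc k w) (FF k) = Wv k w := rfl
  rw [h, pavsc_Wv k hk, pavsc_Wv k hk]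
  ring

lemma fc_ne_gc {k : ℕ} (f : Fin (k-1)) (w : Fin (RR k)) : fc k f ≠ gc k w := by
  intro h
  have := congrArg Fin.val h
  simp only [fc, gc, Fin.natAdd, Fin.castAdd, Fin.castLE] at this
  have := w.2
  omega

lemma delta_filler_neg (k : ℕ) (hk : 2 ≤ k) (v w : Fin (RR k)) (f : Fin (k-1)) :
    pavDelta (AA k) (Wv k v) (fc k f) (gc k w) < 0 := by
  have hk1 : 1 ≤ k := by omega
  set W' := insert (gc k w) ((Wv k v).erase (fc k f)) with hW'
  have hsub : W' ⊆ insert (gc k w) (Wv k v) :=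
    Finset.insert_subset_insert _ (Finset.erase_subset _ _)
  have hdelta : pavDelta (AA k) (Wv k v) (fc k f) (gc k w) =
      (∑ x : Fin (k+1) × Fin k, (hsum ((Abal k (Sum.inl x) ∩ W').card)
        - hsum ((Abal k (Sum.inl x) ∩ Wv k v).card)))
      + (∑ x : Fin (k-1) × Fin (k^2), (hsum ((Abal k (Sum.inr x) ∩ W').card)
        - hsum ((Abal k (Sum.inr x) ∩ Wv k v).card))) := by
    rw [pavDelta, pavsc_VI, pavsc_VI, Fintype.sum_sum_type, Fintype.sum_sum_type, ← hW',
      Finset.sum_sub_distrib, Finset.sum_sub_distrib]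
    ring
  -- bound for ballot voters
  have hinl : ∀ x : Fin (k+1) × Fin k,
      hsum ((Abal k (Sum.inl x) ∩ W').card) - hsum ((Abal k (Sum.inl x) ∩ Wv k v).card)
      ≤ (if ((x.1:ℕ).Prime ∧ ((x.2:ℕ) < 2 ^ tt k (x.1:ℕ)))
          then (1:ℚ)/(PP k (x.1:ℕ)) else 0) := by
    rintro ⟨a, j⟩
    by_cases hv : ((a:ℕ).Prime ∧ ((j:ℕ) < 2 ^ tt k (a:ℕ)))
    · have hak : (a:ℕ) ≤ k := by have := a.2; omega
      have h2 : 2 ≤ PP k (a:ℕ) := two_le_PP hak hv.1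
      have hAbal : Abal k (Sum.inl (a, j)) = BB k (a:ℕ) (j:ℕ) := by
        show (if ((a:ℕ).Prime ∧ (j:ℕ) < 2 ^ tt k (a:ℕ)) then _ else _) = _
        rw [if_pos hv]
      have hcard := card_BB_inter_Wv hk1 hv.1 hak (j:ℕ) v
      set c := (BB k (a:ℕ) (j:ℕ) ∩ Wv k v).card with hc
      have hcge : PP k (a:ℕ) - 1 ≤ c := by rw [hcard]; omega
      have hc' : (BB k (a:ℕ) (j:ℕ) ∩ W').card ≤ c + 1 := by
        have hs1 : BB k (a:ℕ) (j:ℕ) ∩ W' ⊆ insert (gc k w) (BB k (a:ℕ) (j:ℕ) ∩ Wv k v) := by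
          intro x hx
          rw [Finset.mem_inter] at hx
          have hx2 := hsub hx.2
          rw [Finset.mem_insert] at hx2 ⊢
          rcases hx2 with h | h
          · exact Or.inl h
          · exact Or.inr (Finset.mem_inter.2 ⟨hx.1, h⟩)
        calc (BB k (a:ℕ) (j:ℕ) ∩ W').card ≤ _ := Finset.card_le_card hs1
        _ ≤ c + 1 := Finset.card_insert_le _ _
      rw [hAbal, if_pos hv]
      calc hsum ((BB k (a:ℕ) (j:ℕ) ∩ W').card) - hsum c
          ≤ hsum (c+1) - hsum c := by
            have := hsum_mono hc'
            linarith
      _ = 1 / ((c:ℚ) + 1) := by rw [hsum_succ]; ring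
      _ ≤ 1 / (PP k (a:ℕ) : ℚ) := by
            apply one_div_le_one_div_of_le
            · exact_mod_cast (by omega : 0 < PP k (a:ℕ))
            · have : (PP k (a:ℕ) : ℚ) ≤ ((c:ℚ) + 1) := by
                have : PP k (a:ℕ) ≤ c + 1 := by omega
                exact_mod_cast this
              exact this
    · have hAbal : Abal k (Sum.inl (a, j)) = ∅ := by
        show (if ((a:ℕ).Prime ∧ (j:ℕ) < 2 ^ tt k (a:ℕ)) then _ else _) = _
        rw [if_neg hv]
      rw [hAbal, if_neg hv]
      simp
  -- exact value for filler voters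
  have hfcW' : fc k f ∉ W' := by
    rw [hW', Finset.mem_insert]
    push_neg
    exact ⟨fc_ne_gc f w, Finset.notMem_erase _ _⟩
  have hinr : ∀ x : Fin (k-1) × Fin (k^2),
      hsum ((Abal k (Sum.inr x) ∩ W').card) - hsum ((Abal k (Sum.inr x) ∩ Wv k v).card)
      = (if x.1 = f then (-1 : ℚ) else 0) := by
    rintro ⟨f', i⟩
    have hA : Abal k (Sum.inr (f', i)) = ({fc k f'} : Finset (Fin (mm k))) := rfl
    rw [hA, card_fc_inter_Wv, hsum_one]
    by_cases hf : f' = f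
    · subst hf
      rw [Finset.singleton_inter_of_notMem hfcW']
      simp
    · have hmem : fc k f' ∈ W' := by
        rw [hW', Finset.mem_insert]
        refine Or.inr (Finset.mem_erase.2 ⟨?_, fc_mem_Wv f' v⟩)
        exact fun h => hf (fc_inj h)
      rw [Finset.singleton_inter_of_mem hmem, Finset.card_singleton, hsum_one]
      simp [hf]
  -- sum the bounds
  have hsum_inl : (∑ x : Fin (k+1) × Fin k, (hsum ((Abal k (Sum.inl x) ∩ W').card)
      - hsum ((Abal k (Sum.inl x) ∩ Wv k v).card))) ≤ ((k:ℚ) + 1) := by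
    calc (∑ x : Fin (k+1) × Fin k, (hsum ((Abal k (Sum.inl x) ∩ W').card)
        - hsum ((Abal k (Sum.inl x) ∩ Wv k v).card)))
        ≤ ∑ x : Fin (k+1) × Fin k,
          (if ((x.1:ℕ).Prime ∧ ((x.2:ℕ) < 2 ^ tt k (x.1:ℕ)))
            then (1:ℚ)/(PP k (x.1:ℕ)) else 0) := Finset.sum_le_sum (fun x _ => hinl x)
    _ = ∑ a : Fin (k+1), ∑ j : Fin k,
          (if ((a:ℕ).Prime ∧ ((j:ℕ) < 2 ^ tt k (a:ℕ)))
            then (1:ℚ)/(PP k (a:ℕ)) else 0) := by rw [Fintype.sum_prod_type]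
    _ ≤ ∑ _a : Fin (k+1), (1:ℚ) := by
          apply Finset.sum_le_sum
          intro a _
          by_cases hp : (a:ℕ).Prime
          · have hak : (a:ℕ) ≤ k := by have := a.2; omega
            have h2 : 2 ≤ PP k (a:ℕ) := two_le_PP hak hp
            have htle : 2 ^ tt k (a:ℕ) ≤ PP k (a:ℕ) := two_pow_tt_le' hak hp
            have htk : 2 ^ tt k (a:ℕ) ≤ k := le_trans htle (PP_le hk1 hp)
            calc (∑ j : Fin k, (if ((a:ℕ).Prime ∧ ((j:ℕ) < 2 ^ tt k (a:ℕ)))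
                  then (1:ℚ)/(PP k (a:ℕ)) else 0))
                = ∑ j : Fin k, (if ((j:ℕ) < 2 ^ tt k (a:ℕ))
                  then (1:ℚ)/(PP k (a:ℕ)) else 0) := by
                  apply Finset.sum_congr rfl
                  intro j _
                  by_cases hj : (j:ℕ) < 2 ^ tt k (a:ℕ)
                  · rw [if_pos hj, if_pos ⟨hp, hj⟩]
                  · rw [if_neg hj, if_neg (fun hc => hj hc.2)]
            _ = ((2 ^ tt k (a:ℕ) : ℕ) : ℚ) * ((1:ℚ)/(PP k (a:ℕ))) := sum_fin_ind k _ htk _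
            _ ≤ 1 := by
                  rw [mul_one_div, div_le_one (by exact_mod_cast (by omega : 0 < PP k (a:ℕ)))]
                  exact_mod_cast htle
          · have hz : (∑ j : Fin k, (if ((a:ℕ).Prime ∧ ((j:ℕ) < 2 ^ tt k (a:ℕ)))
                then (1:ℚ)/(PP k (a:ℕ)) else 0)) = 0 := by
              apply Finset.sum_eq_zero
              intro j _
              rw [if_neg (fun hc => hp hc.1)]
            rw [hz]
            norm_num
    _ = (k:ℚ) + 1 := by
          rw [Finset.sum_const, Finset.card_univ, Fintype.card_fin, nsmul_eq_mul, mul_one]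
          push_cast
          ring
  have hsum_inr : (∑ x : Fin (k-1) × Fin (k^2), (hsum ((Abal k (Sum.inr x) ∩ W').card)
      - hsum ((Abal k (Sum.inr x) ∩ Wv k v).card))) = -((k^2 : ℕ) : ℚ) := by
    rw [Fintype.sum_prod_type]
    calc (∑ f' : Fin (k-1), ∑ i : Fin (k^2), (hsum ((Abal k (Sum.inr (f', i)) ∩ W').card)
        - hsum ((Abal k (Sum.inr (f', i)) ∩ Wv k v).card)))
        = ∑ f' : Fin (k-1), ∑ _i : Fin (k^2), (if f' = f then (-1 : ℚ) else 0) := by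
          apply Finset.sum_congr rfl
          intro f' _
          apply Finset.sum_congr rfl
          intro i _
          exact hinr (f', i)
    _ = ∑ f' : Fin (k-1), (if f' = f then (-((k^2:ℕ):ℚ)) else 0) := by
          apply Finset.sum_congr rfl
          intro f' _
          by_cases hf : f' = f
          · rw [if_pos hf]
            rw [Finset.sum_const, Finset.card_univ, Fintype.card_fin, nsmul_eq_mul]
            simp [hf]
          · simp [hf]
    _ = -((k^2:ℕ):ℚ) := by
          rw [Finset.sum_ite_eq' Finset.univ f (fun _ => (-((k^2:ℕ):ℚ)))]
          simp
  rw [hdelta, hsum_inr]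
  have hk2 : (2:ℚ) ≤ (k:ℚ) := by exact_mod_cast hk
  have hcast : ((k^2 : ℕ):ℚ) = (k:ℚ)^2 := by push_cast; ring
  rw [hcast]
  nlinarith [hsum_inl]

end LB

-- Part G: trajectory and main theorem
namespace LB
open Finset

attribute [local instance] Classical.propDecidable

lemma RR_pos (k : ℕ) : 0 < RR k := pow_pos (by norm_num) _

lemma swapsL_length (k : ℕ) : (swapsL k).length = RR k - 1 := by
  rw [swapsL, List.length_map, List.length_finRange]

lemma swapsL_get (k : ℕ) (t : ℕ) (ht : t < (swapsL k).length)
    (h1 : t < RR k) (h2 : t + 1 < RR k) :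
    (swapsL k).get ⟨t, ht⟩ = (gc k ⟨t, h1⟩, gc k ⟨t+1, h2⟩) := by
  have ht' : t < RR k - 1 := by rw [swapsL_length] at ht; exact ht
  simp only [swapsL, List.get_eq_getElem, List.getElem_map, List.getElem_finRange]
  constructor <;> rfl

lemma committeeAt_succ {C : Type*} [DecidableEq C] (W0 : Finset C) (s : List (C × C)) (t : ℕ)
    (ht : t < s.length) :
    committeeAt W0 s (t+1) = swapStep (committeeAt W0 s t) (s.get ⟨t, ht⟩) := by
  rw [committeeAt, committeeAt, List.take_succ, List.foldl_append]
  congr 1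
  rw [List.getElem?_eq_getElem ht]
  rfl

lemma swapStep_Wv (k : ℕ) (t t' : Fin (RR k)) (h : t' ≠ t) :
    swapStep (Wv k t) ((gc k t, gc k t')) = Wv k t' := by
  rw [swapStep]
  show ((insert (gc k t') (Wv k t)).erase (gc k t)) = Wv k t'
  rw [Wv, Finset.insert_comm, Finset.erase_insert, ← Wv]
  rw [Finset.mem_insert]
  push_neg
  constructor
  · intro he
    exact h (gc_inj he).symm
  · exact gc_not_mem_FF t

lemma committee_eq (k : ℕ) : ∀ (t : ℕ) (ht : t ≤ RR k - 1),
    committeeAt (Wv k ⟨0, RR_pos k⟩) (swapsL k) t =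
      Wv k ⟨t, by have := RR_pos k; omega⟩ := by
  intro t
  induction t with
  | zero => intro _; rfl
  | succ t ih =>
    intro ht
    have ht' : t < (swapsL k).length := by rw [swapsL_length]; omega
    have h1 : t < RR k := by have := RR_pos k; omega
    have h2 : t + 1 < RR k := by have := RR_pos k; omega
    rw [committeeAt_succ _ _ t ht', ih (by omega), swapsL_get k t ht' h1 h2]
    exact swapStep_Wv k ⟨t, h1⟩ ⟨t+1, h2⟩ (by
      intro he
      have := congrArg Fin.val he
      simp only at this
      omega)

lemma lex_min_at (k : ℕ) (hk : 2 ≤ k) (t t1 : Fin (RR k)) (ht1 : t1.1 = t.1 + 1) :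
    IsLexMinImprovingSwap (· < ·) (AA k) (Wv k t) (gc k t) (gc k t1) := by
  have hk1 : 1 ≤ k := by omega
  have hne : t1 ≠ t := by
    intro h
    have := congrArg Fin.val h
    omega
  refine ⟨gc_mem_Wv t, gc_not_mem_Wv hne, ?_, ?_⟩
  · rw [delta_group k hk1 t t1]
    have hlt : t < t1 := by rw [Fin.lt_def]; omega
    have := valv_strictMono k hlt
    linarith
  · intro a' b' ha' hb' hd
    obtain ⟨w, hw, rfl⟩ := (not_mem_Wv_iff b' t).1 hb'
    rcases (mem_Wv a' t).1 ha' with hag | haf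
    · subst hag
      rw [delta_group k hk1 t w] at hd
      have hwt : t < w := by
        rcases lt_trichotomy t w with h | h | h
        · exact h
        · exfalso; rw [h] at hd; linarith
        · exfalso
          have := valv_strictMono k h
          linarith
      rw [Fin.lt_def] at hwt
      rcases Nat.lt_or_ge (t.1+1) w.1 with h | h
      · left
        show (gc k t1) < (gc k w)
        rw [Fin.lt_def]
        show t1.1 < w.1
        omega
      · right
        have hweq : w = t1 := by
          apply Fin.ext
          omega
        exact ⟨by rw [hweq], Or.inr rfl⟩
    · exfalso
      have hfa : RR k ≤ a'.1 := haf
      have hex : ∃ f : Fin (k-1), a' = fc k f := by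
        have hma := a'.2
        have hmm : a'.1 < RR k + (k-1) := hma
        refine ⟨⟨a'.1 - RR k, by omega⟩, Fin.ext ?_⟩
        simp only [fc, Fin.natAdd]
        omega
      obtain ⟨f, rfl⟩ := hex
      have := delta_filler_neg k hk t w f
      linarith

lemma length_bound (k : ℕ) (hk : 512 ≤ k) :
    ((k:ℚ)/2) ^ (Nat.clog 2 k) ≤ ((RR k - 1 : ℕ) : ℚ) := by
  set c := Nat.clog 2 k with hc
  have hc1 : 1 ≤ c := Nat.clog_pos (by norm_num) (by omega)
  have hJ : c^2 + 1 ≤ JJ k := JJ_ge k hk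
  have hkle : (k:ℚ) ≤ 2^c := by
    have := Nat.le_pow_clog (b := 2) (by norm_num) k
    exact_mod_cast this
  have h1 : ((k:ℚ)/2) ≤ 2^(c-1) := by
    rw [div_le_iff₀ (by norm_num)]
    calc (k:ℚ) ≤ 2^c := hkle
    _ = 2^(c-1)*2 := by rw [← pow_succ]; congr 1; omega
  have h2 : ((k:ℚ)/2)^c ≤ ((2:ℚ)^(c-1))^c := by
    apply pow_le_pow_left₀ _ h1
    positivity
  have h3 : ((2:ℚ)^(c-1))^c = 2^((c-1)*c) := by rw [← pow_mul]
  have h4 : (c-1)*c + 1 ≤ JJ k := by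
    have hcc : (c-1)*c ≤ c*c := Nat.mul_le_mul_right _ (by omega)
    have : c^2 = c*c := sq c
    omega
  have h5 : (2:ℚ)^((c-1)*c) ≤ 2^(JJ k - 1) := by
    apply pow_le_pow_right₀ (by norm_num)
    omega
  have h6 : (2:ℚ)^(JJ k - 1) ≤ ((RR k - 1 : ℕ):ℚ) := by
    have hnat : 2^(JJ k - 1) ≤ 2^(JJ k) - 1 := by
      have h7 : 2^(JJ k - 1) * 2 = 2^(JJ k) := by
        rw [← pow_succ]
        congr 1
        omega
      have h8 : 1 ≤ 2^(JJ k - 1) := Nat.one_le_two_pow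
      omega
    calc (2:ℚ)^(JJ k - 1) = ((2^(JJ k - 1) : ℕ):ℚ) := by push_cast; ring
    _ ≤ ((2^(JJ k) - 1 : ℕ):ℚ) := by exact_mod_cast hnat
    _ = ((RR k - 1:ℕ):ℚ) := rfl
  calc ((k:ℚ)/2)^c ≤ ((2:ℚ)^(c-1))^c := h2
  _ = 2^((c-1)*c) := h3
  _ ≤ 2^(JJ k - 1) := h5
  _ ≤ ((RR k - 1 : ℕ):ℚ) := h6

end LB


/-- For all sufficiently large `k` there exist an approval election with
at most `20k⁴` voters, a linear order on the candidates, and an initial committee `W₀` of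
size `k`, such that `0⁺`-ls-PAV with the lexicographic pivoting rule started from `W₀`
performs at least `(k/2)^⌈log₂ k⌉` swaps (each performed swap being the lexicographically
smallest PAV-score-improving swap at that step). -/
theorem lex_better_response_lower_bound :
    ∃ K : ℕ, ∀ k : ℕ, K ≤ k →
    ∃ (n m : ℕ) (A : Fin n → Finset (Fin m)) (lt : Fin m → Fin m → Prop)
      (_ : IsStrictTotalOrder (Fin m) lt)
      (W0 : Finset (Fin m)) (swaps : List (Fin m × Fin m)),
      1 ≤ k ∧ k ≤ m ∧
      n ≤ 20 * k ^ 4 ∧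
      W0.card = k ∧
      ((k : ℚ) / 2) ^ Nat.clog 2 k ≤ (swaps.length : ℚ) ∧
      ValidSwapSeq W0 swaps ∧
      ∀ (t : ℕ) (ht : t < swaps.length),
        IsLexMinImprovingSwap lt A (committeeAt W0 swaps t)
          (swaps.get ⟨t, ht⟩).1 (swaps.get ⟨t, ht⟩).2 := by
  classical
  refine ⟨512, fun k hk => ?_⟩
  have hk1 : 1 ≤ k := by omega
  have hk2 : 2 ≤ k := by omega
  have hR1 : 0 < LB.RR k := LB.RR_pos k
  refine ⟨LB.nn k, LB.mm k, LB.AA k, (· < ·), inferInstance,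
    LB.Wv k ⟨0, hR1⟩, LB.swapsL k, hk1, ?_, ?_, LB.card_Wv k hk1 _, ?_, ?_, ?_⟩
  · -- k ≤ m
    show k ≤ LB.RR k + (k - 1)
    omega
  · -- n ≤ 20 k^4
    show (k+1) * k + (k-1) * k^2 ≤ 20 * k^4
    have e1 : (k+1) * k + (k-1) * k^2 ≤ (k+k) * k + k * k^2 :=
      Nat.add_le_add (Nat.mul_le_mul_right k (by omega)) (Nat.mul_le_mul_right _ (by omega))
    have e2 : (k+k) * k + k * k^2 = 2 * k^2 + k^3 := by ring
    have e3 : k^2 ≤ k^4 := Nat.pow_le_pow_right hk1 (by norm_num)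
    have e4 : k^3 ≤ k^4 := Nat.pow_le_pow_right hk1 (by norm_num)
    calc (k+1) * k + (k-1) * k^2 ≤ 2 * k^2 + k^3 := by omega
    _ ≤ 2 * k^4 + k^4 := by omega
    _ ≤ 20 * k^4 := by omega
  · -- length bound
    rw [LB.swapsL_length]
    exact LB.length_bound k hk
  · -- valid swap sequence
    intro t ht
    have ht' : t < LB.RR k - 1 := by rw [LB.swapsL_length] at ht; exact ht
    have h1 : t < LB.RR k := by omega
    have h2 : t + 1 < LB.RR k := by omega
    rw [LB.swapsL_get k t ht h1 h2, LB.committee_eq k t (by omega)]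
    constructor
    · exact LB.gc_mem_Wv _
    · apply LB.gc_not_mem_Wv
      intro he
      have := congrArg Fin.val he
      simp only at this
      omega
  · -- every performed swap is the lexicographically minimal improving swap
    intro t ht
    have ht' : t < LB.RR k - 1 := by rw [LB.swapsL_length] at ht; exact ht
    have h1 : t < LB.RR k := by omega
    have h2 : t + 1 < LB.RR k := by omega
    rw [LB.swapsL_get k t ht h1 h2, LB.committee_eq k t (by omega)]
    exact LB.lex_min_at k hk2 ⟨t, h1⟩ ⟨t+1, h2⟩ rfl
end

section
/- Let E = (N, C, (A_v)_{v in N}, k) be an approval election with n = |N| ≥ 1 voters, and let (a_1,b_1),…,(a_s,b_s) be a valid sequence of swaps starting from a committee W_0 with |W_0| = k such that Δ(W_{t−1}, a_t, b_t) ≥ n/k² for every t ∈ {1,…,s}. Then s ≤ k²·H_k, where H_k = Σ_{j=1}^{k} 1/j. In particular, s = O(k² log k). -/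
lemma pavsc_nonneg {V C : Type*} [Fintype V] [DecidableEq C]
    (A : V → Finset C) (W : Finset C) : 0 ≤ pavsc A W := by
  apply Finset.sum_nonneg; intro v _
  apply Finset.sum_nonneg; intro j _
  positivity

lemma pavsc_le {V C : Type*} [Fintype V] [DecidableEq C]
    (A : V → Finset C) (W : Finset C) {k : ℕ} (hW : W.card = k) :
    pavsc A W ≤ (Fintype.card V : ℚ) * ∑ j ∈ Finset.range k, (1 : ℚ) / (j + 1) := by
  have : pavsc A W ≤ ∑ _v : V, ∑ j ∈ Finset.range k, (1 : ℚ) / (j + 1) := by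
    apply Finset.sum_le_sum; intro v _
    apply Finset.sum_le_sum_of_subset_of_nonneg
    · apply Finset.range_subset_range.2
      rw [← hW]; exact Finset.card_le_card (Finset.inter_subset_right)
    · intro j _ _; positivity
  simpa using this

lemma committeeAt_succ' {C : Type*} [DecidableEq C] (W0 : Finset C) (swaps : List (C × C))
    (t : ℕ) (ht : t < swaps.length) :
    committeeAt W0 swaps (t + 1) = swapStep (committeeAt W0 swaps t) (swaps.get ⟨t, ht⟩) := by
  unfold committeeAt
  rw [List.take_succ, List.foldl_append]
  simp [List.getElem?_eq_getElem ht]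

/-- In any approval election with `n ≥ 1` voters, a valid sequence of
swaps starting from a size-`k` committee in which every swap increases the PAV score by
at least `n/k²` has length at most `k²·H_k`, where `H_k = ∑_{j=1}^k 1/j`. -/
theorem upper_bound_threshold_swaps {V C : Type*} [Fintype V] [Fintype C] [DecidableEq C]
    (A : V → Finset C) (k : ℕ) (hk : 1 ≤ k) (hkC : k ≤ Fintype.card C)
    (hn : 1 ≤ Fintype.card V)
    (W0 : Finset C) (hW0 : W0.card = k)
    (swaps : List (C × C)) (hvalid : ValidSwapSeq W0 swaps)
    (hgood : ∀ (t : ℕ) (ht : t < swaps.length),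
      (Fintype.card V : ℚ) / (k : ℚ) ^ 2 ≤
        pavDelta A (committeeAt W0 swaps t)
          (swaps.get ⟨t, ht⟩).1 (swaps.get ⟨t, ht⟩).2) :
    (swaps.length : ℚ) ≤ (k : ℚ) ^ 2 * ∑ j ∈ Finset.range k, (1 : ℚ) / (j + 1) := by
  classical
  set n : ℚ := (Fintype.card V : ℚ) with hnq
  set H : ℚ := ∑ j ∈ Finset.range k, (1 : ℚ) / (j + 1) with hH
  have hk2 : (0 : ℚ) < (k : ℚ) ^ 2 := by positivity
  have hn1 : (1 : ℚ) ≤ n := by rw [hnq]; exact_mod_cast hn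
  have hn0 : (0 : ℚ) < n := lt_of_lt_of_le one_pos hn1
  -- cards stay k
  have hcard : ∀ t ≤ swaps.length, (committeeAt W0 swaps t).card = k := by
    intro t
    induction t with
    | zero => intro _; simpa [committeeAt] using hW0
    | succ t ih =>
      intro ht
      have ht' : t < swaps.length := Nat.lt_of_succ_le ht
      obtain ⟨ha, hb⟩ := hvalid t ht'
      rw [committeeAt_succ' W0 swaps t ht', swapStep]
      rw [Finset.card_erase_of_mem (Finset.mem_insert_of_mem ha),
        Finset.card_insert_of_notMem hb, ih (le_of_lt ht')]
      omega
  -- score accumulates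
  have hscore : ∀ t ≤ swaps.length,
      pavsc A W0 + t * (n / (k : ℚ) ^ 2) ≤ pavsc A (committeeAt W0 swaps t) := by
    intro t
    induction t with
    | zero => intro _; simp [committeeAt]
    | succ t ih =>
      intro ht
      have ht' : t < swaps.length := Nat.lt_of_succ_le ht
      obtain ⟨ha, hb⟩ := hvalid t ht'
      have hgd := hgood t ht'
      have hab : (swaps.get ⟨t, ht'⟩).2 ≠ (swaps.get ⟨t, ht'⟩).1 := by
        intro h; exact hb (h ▸ ha)
      have heq : insert (swaps.get ⟨t, ht'⟩).2 ((committeeAt W0 swaps t).erase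
          (swaps.get ⟨t, ht'⟩).1) = committeeAt W0 swaps (t + 1) := by
        rw [committeeAt_succ' W0 swaps t ht', swapStep,
          Finset.erase_insert_of_ne hab]
      rw [pavDelta, heq] at hgd
      have := ih (le_of_lt ht')
      push_cast
      linarith
  -- combine
  have h1 := hscore swaps.length le_rfl
  have h2 := pavsc_le A (committeeAt W0 swaps swaps.length)
    (hcard swaps.length le_rfl)
  have h3 := pavsc_nonneg A W0
  have key : (swaps.length : ℚ) * (n / (k : ℚ) ^ 2) ≤ n * H := by
    calc (swaps.length : ℚ) * (n / (k : ℚ) ^ 2)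
        ≤ pavsc A (committeeAt W0 swaps swaps.length) := by linarith
      _ ≤ n * H := h2
  have key2 : (swaps.length : ℚ) * n ≤ (k : ℚ) ^ 2 * (n * H) := by
    have := mul_le_mul_of_nonneg_left key (le_of_lt hk2)
    calc (swaps.length : ℚ) * n = (k : ℚ) ^ 2 * ((swaps.length : ℚ) * (n / (k : ℚ) ^ 2)) := by
          field_simp
      _ ≤ (k : ℚ) ^ 2 * (n * H) := this
  have hring : (k : ℚ) ^ 2 * (n * H) = ((k : ℚ) ^ 2 * H) * n := by ring
  exact le_of_mul_le_mul_right (by linarith) hn0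
end

section
/- For all integers j, k with 1 ≤ j < k − 1, the elections F(j, k−1) and F(j, k) have the same voter set N, of size 2^j. For each voter v ∈ N, denote by A_v its ballot in F(j, k−1) and by A'_v its ballot in F(j, k). Then A_v ⊆ A'_v, |A'_v ∖ A_v| = 1, and the unique candidate in A'_v ∖ A_v is a dummy candidate (an element of D_{k−1}). -/
/-- PAV score of committee `W` for an election whose voters are given by a list of
ballots (one list entry per voter). -/
def pavscL {C : Type*} [DecidableEq C] (ballots : List (Finset C)) (W : Finset C) : ℚ :=
  (ballots.map (fun A => ∑ j ∈ Finset.range ((A ∩ W).card), (1 : ℚ) / (j + 1))).sum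

/-- `Δ(W,a,b) = pavsc((W ∖ {a}) ∪ {b}) − pavsc(W)` for a list-encoded election. -/
def pavDeltaL {C : Type*} [DecidableEq C] (ballots : List (Finset C)) (W : Finset C)
    (a b : C) : ℚ :=
  pavscL ballots (insert b (W.erase a)) - pavscL ballots W

/-- Candidates: dummy candidates `d i`, the special candidates `a`, `b`, `x`, `y`,
and the chain candidates `c i`. -/
inductive Cand : Type
  | d : ℕ → Cand
  | a : Cand
  | b : Cand
  | x : Cand
  | y : Cand
  | c : ℕ → Cand
  deriving DecidableEq

/-- The set `D_ℓ = {d_1, …, d_ℓ}` of dummy candidates. -/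
def Dset (ℓ : ℕ) : Finset Cand := (Finset.Icc 1 ℓ).image Cand.d

/-- The relabelling exchanging the candidates `a` and `b`. -/
def swapAB : Cand → Cand
  | Cand.a => Cand.b
  | Cand.b => Cand.a
  | z => z

/-- The ballots of the election `F(j,k)` (candidate set `D_{k−1} ∪ {a,b}`, committee
size `k`): `F(1,k)` has two voters with ballots `D_{k−1} ∪ {a}` and `D_{k−2} ∪ {b}`;
`F(j,k)` for `j > 1` is the disjoint union of `F(j−1,k)` with `a,b` exchanged and
`F(j−1,k−1)` (whose candidates `a₂,b₂` are renamed to `a,b`). -/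
def Fballots : ℕ → ℕ → List (Finset Cand)
  | 0, _ => []
  | 1, k => [Dset (k - 1) ∪ {Cand.a}, Dset (k - 2) ∪ {Cand.b}]
  | (j + 2), k =>
      (Fballots (j + 1) k).map (Finset.image swapAB) ++ Fballots (j + 1) (k - 1)

/-- The ballots of the election `E(j,k)` (candidate set `D_{k−2} ∪ {x,y} ∪ {a,b}`,
committee size `k`): two disjoint copies of `F(j−1,k−1)`; in the first copy `a,b` are
exchanged and `x` is added to each ballot, in the second copy `y` is added to each
ballot. The natural bijection `s` sends the voter with index `v < 2^(j−1)` (first copy)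
to the voter with index `v + 2^(j−1)` (second copy). -/
def Eballots (j k : ℕ) : List (Finset Cand) :=
  (Fballots (j - 1) (k - 1)).map (fun A => insert Cand.x (A.image swapAB)) ++
  (Fballots (j - 1) (k - 1)).map (fun A => insert Cand.y A)

/-- `δ(j,k) = j! / ∏_{j'=0}^{j} (k − j')`. -/
def deltaFn (j k : ℕ) : ℚ :=
  (Nat.factorial j : ℚ) / ∏ j' ∈ Finset.range (j + 1), ((k : ℚ) - (j' : ℚ))


lemma swapAB_invol (z : Cand) : swapAB (swapAB z) = z := by cases z <;> rfl

lemma swapAB_inj : Function.Injective swapAB :=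
  Function.LeftInverse.injective swapAB_invol

lemma Dset_mono {m n : ℕ} (h : m ≤ n) : Dset m ⊆ Dset n :=
  Finset.image_subset_image (Finset.Icc_subset_Icc_right h)

lemma image_swap_of_dummy {S : Finset Cand} {ℓ : ℕ} (h : S ⊆ Dset ℓ) :
    S.image swapAB = S := by
  have : ∀ x ∈ S, swapAB x = x := by
    intro x hx
    obtain ⟨i, -, rfl⟩ := Finset.mem_image.mp (h hx)
    rfl
  rw [Finset.image_congr (g := id) (fun x hx => this x hx), Finset.image_id]

lemma dd_diff (m : ℕ) (hm : 1 ≤ m) (t : Cand) (ht : ∀ i, t ≠ Cand.d i) :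
    (Dset m ∪ {t}) \ (Dset (m - 1) ∪ {t}) = {Cand.d m} := by
  ext z
  simp only [Finset.mem_sdiff, Finset.mem_union, Finset.mem_singleton, Dset,
    Finset.mem_image, Finset.mem_Icc, not_or, not_exists, not_and]
  constructor
  · rintro ⟨h1 | rfl, h2, h3⟩
    · obtain ⟨i, ⟨hi1, hi2⟩, rfl⟩ := h1
      by_contra hne
      have hine : i ≠ m := fun h => hne (by rw [h])
      exact h2 i ⟨hi1, by omega⟩ rfl
    · exact absurd rfl h3
  · rintro rfl
    refine ⟨Or.inl ⟨m, ⟨hm, le_rfl⟩, rfl⟩, fun i hi hdi => ?_, fun h => ht m h.symm⟩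
    have : i = m := Cand.d.inj hdi
    omega

lemma Fballots_length : ∀ j k : ℕ, 1 ≤ j → (Fballots j k).length = 2 ^ j
  | 1, k, _ => by simp [Fballots]
  | (j + 2), k, _ => by
    simp [Fballots, Fballots_length (j + 1) k (by omega),
      Fballots_length (j + 1) (k - 1) (by omega)]
    ring

lemma getD_map_lt {l : List (Finset Cand)} {f : Finset Cand → Finset Cand} {v : ℕ}
    (h : v < l.length) : (l.map f).getD v ∅ = f (l.getD v ∅) := by
  rw [List.getD_eq_getElem _ _ (by simpa using h), List.getD_eq_getElem _ _ h,
    List.getElem_map]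

lemma F_main : ∀ j k : ℕ, 1 ≤ j → j < k - 1 → ∀ v : ℕ, v < 2 ^ j →
    (Fballots j (k - 1)).getD v ∅ ⊆ (Fballots j k).getD v ∅ ∧
    (((Fballots j k).getD v ∅) \ ((Fballots j (k - 1)).getD v ∅)).card = 1 ∧
    (((Fballots j k).getD v ∅) \ ((Fballots j (k - 1)).getD v ∅)) ⊆ Dset (k - 1)
  | 0, _, h, _, _, _ => absurd h (by omega)
  | 1, k, _, hk, v, hv => by
    have hk3 : 3 ≤ k := by omega
    interval_cases v
    · have e1 : (Fballots 1 (k - 1)).getD 0 ∅ = Dset (k - 2) ∪ {Cand.a} := by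
        have : k - 1 - 1 = k - 2 := by omega
        simp [Fballots, this]
      have e2 : (Fballots 1 k).getD 0 ∅ = Dset (k - 1) ∪ {Cand.a} := by
        simp [Fballots]
      rw [e1, e2]
      have hdiff : (Dset (k - 1) ∪ {Cand.a}) \ (Dset (k - 2) ∪ {Cand.a})
          = {Cand.d (k - 1)} := by
        have h' := dd_diff (k - 1) (by omega) Cand.a (fun i => by simp)
        rwa [show k - 1 - 1 = k - 2 by omega] at h'
      refine ⟨Finset.union_subset_union (Dset_mono (by omega)) le_rfl, ?_, ?_⟩
      · rw [hdiff]; simp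
      · rw [hdiff]
        simp only [Finset.singleton_subset_iff, Dset, Finset.mem_image, Finset.mem_Icc]
        exact ⟨k - 1, ⟨by omega, le_rfl⟩, rfl⟩
    · have e1 : (Fballots 1 (k - 1)).getD 1 ∅ = Dset (k - 3) ∪ {Cand.b} := by
        have : k - 1 - 2 = k - 3 := by omega
        simp [Fballots, this]
      have e2 : (Fballots 1 k).getD 1 ∅ = Dset (k - 2) ∪ {Cand.b} := by
        simp [Fballots]
      rw [e1, e2]
      have hdiff : (Dset (k - 2) ∪ {Cand.b}) \ (Dset (k - 3) ∪ {Cand.b})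
          = {Cand.d (k - 2)} := by
        have h' := dd_diff (k - 2) (by omega) Cand.b (fun i => by simp)
        rwa [show k - 2 - 1 = k - 3 by omega] at h'
      refine ⟨Finset.union_subset_union (Dset_mono (by omega)) le_rfl, ?_, ?_⟩
      · rw [hdiff]; simp
      · rw [hdiff]
        simp only [Finset.singleton_subset_iff, Dset, Finset.mem_image, Finset.mem_Icc]
        exact ⟨k - 2, ⟨by omega, by omega⟩, rfl⟩
  | (j + 2), k, _, hk, v, hv => by
    have hk5 : j + 4 ≤ k := by omega
    have hlen1 : ((Fballots (j + 1) k).map (Finset.image swapAB)).length = 2 ^ (j + 1) := by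
      rw [List.length_map, Fballots_length (j + 1) k (by omega)]
    have hlen1' : ((Fballots (j + 1) (k - 1)).map (Finset.image swapAB)).length
        = 2 ^ (j + 1) := by
      rw [List.length_map, Fballots_length (j + 1) (k - 1) (by omega)]
    have hpow : 2 ^ (j + 2) = 2 ^ (j + 1) + 2 ^ (j + 1) := by ring
    have hFk : Fballots (j + 2) k
        = (Fballots (j + 1) k).map (Finset.image swapAB) ++ Fballots (j + 1) (k - 1) := rfl
    have hFk1 : Fballots (j + 2) (k - 1)
        = (Fballots (j + 1) (k - 1)).map (Finset.image swapAB)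
          ++ Fballots (j + 1) (k - 2) := by
      rw [show Fballots (j + 2) (k - 1)
        = (Fballots (j + 1) (k - 1)).map (Finset.image swapAB)
          ++ Fballots (j + 1) (k - 1 - 1) from rfl, show k - 1 - 1 = k - 2 by omega]
    by_cases hsmall : v < 2 ^ (j + 1)
    · have e2 : (Fballots (j + 2) k).getD v ∅
          = ((Fballots (j + 1) k).getD v ∅).image swapAB := by
        rw [hFk, List.getD_append _ _ _ _ (by rw [hlen1]; exact hsmall),
          getD_map_lt (by rw [Fballots_length (j + 1) k (by omega)]; exact hsmall)]
      have e1 : (Fballots (j + 2) (k - 1)).getD v ∅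
          = ((Fballots (j + 1) (k - 1)).getD v ∅).image swapAB := by
        rw [hFk1, List.getD_append _ _ _ _ (by rw [hlen1']; exact hsmall),
          getD_map_lt (by rw [Fballots_length (j + 1) (k - 1) (by omega)]; exact hsmall)]
      obtain ⟨ih1, ih2, ih3⟩ := F_main (j + 1) k (by omega) (by omega) v hsmall
      rw [e1, e2]
      have hsd : (((Fballots (j + 1) k).getD v ∅).image swapAB)
          \ (((Fballots (j + 1) (k - 1)).getD v ∅).image swapAB)
          = ((Fballots (j + 1) k).getD v ∅ \ (Fballots (j + 1) (k - 1)).getD v ∅).image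
            swapAB := (Finset.image_sdiff _ _ swapAB_inj).symm
      rw [hsd, image_swap_of_dummy ih3]
      exact ⟨Finset.image_subset_image ih1, ih2, ih3⟩
    · have hv2 : v - 2 ^ (j + 1) < 2 ^ (j + 1) := by omega
      have e2 : (Fballots (j + 2) k).getD v ∅
          = (Fballots (j + 1) (k - 1)).getD (v - 2 ^ (j + 1)) ∅ := by
        rw [hFk, List.getD_append_right _ _ _ _ (by rw [hlen1]; omega), hlen1]
      have e1 : (Fballots (j + 2) (k - 1)).getD v ∅
          = (Fballots (j + 1) (k - 2)).getD (v - 2 ^ (j + 1)) ∅ := by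
        rw [hFk1, List.getD_append_right _ _ _ _ (by rw [hlen1']; omega), hlen1']
      obtain ⟨ih1, ih2, ih3⟩ := F_main (j + 1) (k - 1) (by omega) (by omega)
        (v - 2 ^ (j + 1)) hv2
      rw [show k - 1 - 1 = k - 2 by omega] at ih1 ih2 ih3
      rw [e1, e2]
      exact ⟨ih1, ih2, fun x hx => Dset_mono (by omega) (ih3 hx)⟩

/-- For `1 ≤ j < k − 1`, the elections `F(j,k−1)` and `F(j,k)` have the
same voter set, of size `2^j`, and for every voter `v` the ballot `A_v` in `F(j,k−1)` is
contained in the ballot `A'_v` in `F(j,k)`; moreover `|A'_v ∖ A_v| = 1` and the unique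
candidate in `A'_v ∖ A_v` is a dummy candidate from `D_{k−1}`. -/
theorem F_ballots_k_vs_k_sub_one (j k : ℕ) (hj : 1 ≤ j) (hjk : j < k - 1) :
    (Fballots j (k - 1)).length = 2 ^ j ∧
    (Fballots j k).length = 2 ^ j ∧
    ∀ v : ℕ, v < 2 ^ j →
      (Fballots j (k - 1)).getD v ∅ ⊆ (Fballots j k).getD v ∅ ∧
      (((Fballots j k).getD v ∅) \ ((Fballots j (k - 1)).getD v ∅)).card = 1 ∧
      (((Fballots j k).getD v ∅) \ ((Fballots j (k - 1)).getD v ∅)) ⊆ Dset (k - 1) :=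
  ⟨Fballots_length j (k - 1) hj, Fballots_length j k hj, F_main j k hj hjk⟩
end

section
/- For all integers j, k with 2 ≤ j < k, in the election E(j,k), the committee W = D_{k−2} ∪ {x, a} satisfies: (1) Δ(W, a, b) = δ(j,k); and (2) every voter v satisfies |A_v ∩ W| ≥ k − (j+1). -/
namespace EAtom

lemma mem_Dset {z : Cand} {m : ℕ} : z ∈ Dset m ↔ ∃ i, 1 ≤ i ∧ i ≤ m ∧ Cand.d i = z := by
  simp [Dset, and_assoc]

@[simp] lemma d_mem_Dset {i m : ℕ} : Cand.d i ∈ Dset m ↔ 1 ≤ i ∧ i ≤ m := by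
  simp [Dset]

@[simp] lemma a_not_mem (m : ℕ) : Cand.a ∉ Dset m := by simp [Dset]
@[simp] lemma b_not_mem (m : ℕ) : Cand.b ∉ Dset m := by simp [Dset]
@[simp] lemma x_not_mem (m : ℕ) : Cand.x ∉ Dset m := by simp [Dset]
@[simp] lemma y_not_mem (m : ℕ) : Cand.y ∉ Dset m := by simp [Dset]

lemma card_Dset (m : ℕ) : (Dset m).card = m := by
  rw [Dset, Finset.card_image_of_injective _ (fun i j h => by cases h; rfl), Nat.card_Icc]
  omega

@[simp] lemma image_swap_Dset (m : ℕ) : (Dset m).image swapAB = Dset m := by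
  ext z
  simp only [Finset.mem_image, mem_Dset]
  constructor
  · rintro ⟨w, ⟨i, h1, h2, rfl⟩, rfl⟩; exact ⟨i, h1, h2, rfl⟩
  · rintro ⟨i, h1, h2, rfl⟩; exact ⟨Cand.d i, ⟨i, h1, h2, rfl⟩, rfl⟩

lemma image_swap_a (m : ℕ) : (Dset m ∪ {Cand.a}).image swapAB = Dset m ∪ {Cand.b} := by
  rw [Finset.image_union, image_swap_Dset]; rfl

lemma image_swap_b (m : ℕ) : (Dset m ∪ {Cand.b}).image swapAB = Dset m ∪ {Cand.a} := by
  rw [Finset.image_union, image_swap_Dset]; rfl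

@[simp] lemma swap_swap (A : Finset Cand) : (A.image swapAB).image swapAB = A := by
  rw [Finset.image_image]
  have : swapAB ∘ swapAB = id := by funext z; cases z <;> rfl
  rw [this, Finset.image_id]

end EAtom
namespace EAtom
@[simp] lemma c_not_mem (i m : ℕ) : Cand.c i ∉ Dset m := by simp [Dset]
end EAtom
namespace EAtom

def Wa (n : ℕ) : Finset Cand := Dset n ∪ {Cand.x, Cand.a}
def Wb (n : ℕ) : Finset Cand := Dset n ∪ {Cand.x, Cand.b}

lemma Wb_eq (n : ℕ) : insert Cand.b ((Wa n).erase Cand.a) = Wb n := by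
  ext z; cases z <;> simp [Wa, Wb]

variable {m n : ℕ}

lemma I1 (h : m ≤ n) :
    insert Cand.x (Dset m ∪ {Cand.b}) ∩ Wa n = insert Cand.x (Dset m) := by
  ext z; cases z <;> simp [Wa] <;> omega

lemma I2 (h : m ≤ n) :
    insert Cand.x (Dset m ∪ {Cand.b}) ∩ Wb n = insert Cand.x (insert Cand.b (Dset m)) := by
  ext z; cases z <;> simp [Wb] <;> omega

lemma I3 (h : m ≤ n) :
    insert Cand.y (Dset m ∪ {Cand.a}) ∩ Wa n = insert Cand.a (Dset m) := by
  ext z; cases z <;> simp [Wa] <;> omega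

lemma I4 (h : m ≤ n) :
    insert Cand.y (Dset m ∪ {Cand.a}) ∩ Wb n = Dset m := by
  ext z; cases z <;> simp [Wb] <;> omega

lemma I5 (h : m ≤ n) :
    insert Cand.x (Dset m ∪ {Cand.a}) ∩ Wa n = insert Cand.x (insert Cand.a (Dset m)) := by
  ext z; cases z <;> simp [Wa] <;> omega

lemma I6 (h : m ≤ n) :
    insert Cand.x (Dset m ∪ {Cand.a}) ∩ Wb n = insert Cand.x (Dset m) := by
  ext z; cases z <;> simp [Wb] <;> omega

lemma I7 (h : m ≤ n) :
    insert Cand.y (Dset m ∪ {Cand.b}) ∩ Wa n = Dset m := by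
  ext z; cases z <;> simp [Wa] <;> omega

lemma I8 (h : m ≤ n) :
    insert Cand.y (Dset m ∪ {Cand.b}) ∩ Wb n = insert Cand.b (Dset m) := by
  ext z; cases z <;> simp [Wb] <;> omega

lemma cD : (Dset m).card = m := card_Dset m
lemma cxD : (insert Cand.x (Dset m)).card = m + 1 := by
  rw [Finset.card_insert_of_notMem (x_not_mem m), card_Dset]
lemma caD : (insert Cand.a (Dset m)).card = m + 1 := by
  rw [Finset.card_insert_of_notMem (a_not_mem m), card_Dset]
lemma cbD : (insert Cand.b (Dset m)).card = m + 1 := by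
  rw [Finset.card_insert_of_notMem (b_not_mem m), card_Dset]
lemma cxbD : (insert Cand.x (insert Cand.b (Dset m))).card = m + 2 := by
  rw [Finset.card_insert_of_notMem (by simp), cbD]
lemma cxaD : (insert Cand.x (insert Cand.a (Dset m))).card = m + 2 := by
  rw [Finset.card_insert_of_notMem (by simp), caD]

end EAtom
namespace EAtom

def harm (n : ℕ) : ℚ := ∑ i ∈ Finset.range n, (1 : ℚ) / (i + 1)

lemma harm_succ (n : ℕ) : harm (n + 1) = harm n + 1 / (n + 1) := by
  simp [harm, Finset.sum_range_succ]

/-- Per-voter contribution of the `F(j-1,k-1)` ballot `A` to `Δ(W,a,b)` in `E(j,k)`,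
counting both copies of the voter. -/
def phi (n : ℕ) (A : Finset Cand) : ℚ :=
  (harm ((insert Cand.x (A.image swapAB) ∩ Wb n).card)
    - harm ((insert Cand.x (A.image swapAB) ∩ Wa n).card))
  + (harm ((insert Cand.y A ∩ Wb n).card)
    - harm ((insert Cand.y A ∩ Wa n).card))

lemma phi_a {m n : ℕ} (h : m ≤ n) :
    phi n (Dset m ∪ {Cand.a}) = 1 / ((m : ℚ) + 2) - 1 / ((m : ℚ) + 1) := by
  rw [phi, image_swap_a, I1 h, I2 h, I3 h, I4 h, cxD, cxbD, caD, cD,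
    harm_succ (m+1), harm_succ m]
  push_cast
  ring

lemma phi_b {m n : ℕ} (h : m ≤ n) :
    phi n (Dset m ∪ {Cand.b}) = 1 / ((m : ℚ) + 1) - 1 / ((m : ℚ) + 2) := by
  rw [phi, image_swap_b, I5 h, I6 h, I7 h, I8 h, cxaD, cxD, cD, cbD,
    harm_succ (m+1), harm_succ m]
  push_cast
  ring

end EAtom
namespace EAtom

lemma prod_ne {a b : ℕ} (h : a ≤ b) :
    ∏ i ∈ Finset.range a, ((b : ℚ) - (i : ℚ)) ≠ 0 := by
  refine Finset.prod_ne_zero_iff.mpr fun i hi => sub_ne_zero.mpr ?_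
  have : i < b := lt_of_lt_of_le (Finset.mem_range.mp hi) h
  exact_mod_cast (Nat.ne_of_lt this).symm

lemma deltaFn_step (j K : ℕ) (h : j + 1 ≤ K) :
    deltaFn (j + 1) (K + 1) = deltaFn j K - deltaFn j (K + 1) := by
  rw [deltaFn, deltaFn, deltaFn, Nat.factorial_succ]
  push_cast
  have hQ := prod_ne (show j + 1 ≤ K from h)
  have hP1 := prod_ne (show j + 1 ≤ K + 1 from h.trans (Nat.le_succ K))
  push_cast at hP1
  set Q : ℚ := ∏ i ∈ Finset.range (j + 1), ((K : ℚ) - (i : ℚ)) with hQdef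
  set P1 : ℚ := ∏ i ∈ Finset.range (j + 1), ((K : ℚ) + 1 - (i : ℚ)) with hP1def
  have e1 : ∏ i ∈ Finset.range (j + 2), ((K : ℚ) + 1 - (i : ℚ)) = ((K : ℚ) + 1) * Q := by
    rw [Finset.prod_range_succ']
    rw [hQdef]
    have : ∀ i ∈ Finset.range (j + 1), ((K : ℚ) + 1 - ((i : ℚ) + 1)) = ((K : ℚ) - i) := by
      intro i _; ring
    have h2 : ∀ i ∈ Finset.range (j + 1), ((K : ℚ) + 1 - ((i + 1 : ℕ) : ℚ)) = ((K : ℚ) - i) := by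
      intro i _; push_cast; ring
    rw [Finset.prod_congr rfl h2]
    ring
  have e2 : ∏ i ∈ Finset.range (j + 2), ((K : ℚ) + 1 - (i : ℚ))
      = P1 * ((K : ℚ) - (j : ℚ)) := by
    rw [Finset.prod_range_succ, hP1def]
    push_cast
    ring
  have key : P1 * ((K : ℚ) - (j : ℚ)) = ((K : ℚ) + 1) * Q := by rw [← e2, e1]
  rw [e1]
  have hK1 : ((K : ℚ) + 1) ≠ 0 := by positivity
  field_simp
  linear_combination (-1 : ℚ) * key

end EAtom
namespace EAtom

lemma deltaFn_two (κ : ℕ) (h : 2 ≤ κ) :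
    deltaFn 2 (κ + 1)
      = (1 / ((κ : ℚ) + 1) - 1 / (κ : ℚ)) + (1 / ((κ : ℚ) - 1) - 1 / (κ : ℚ)) := by
  have h0 : (κ : ℚ) ≠ 0 := by
    have : (2 : ℚ) ≤ (κ : ℚ) := by exact_mod_cast h
    linarith
  have h1 : (κ : ℚ) - 1 ≠ 0 := by
    have : (2 : ℚ) ≤ (κ : ℚ) := by exact_mod_cast h
    intro hc; linarith
  have h2 : (κ : ℚ) + 1 ≠ 0 := by positivity
  rw [deltaFn]
  rw [Finset.prod_range_succ, Finset.prod_range_succ, Finset.prod_range_one]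
  norm_num [Nat.factorial]
  push_cast
  have h3 : -(κ:ℚ) + (κ:ℚ)^3 ≠ 0 := by
    have e : -(κ:ℚ) + (κ:ℚ)^3 = (κ:ℚ)*((κ:ℚ)-1)*((κ:ℚ)+1) := by ring
    rw [e]; exact mul_ne_zero (mul_ne_zero h0 h1) h2
  field_simp [h3]
  rw [show (κ:ℚ) + 1 - 2 = (κ:ℚ) - 1 by ring, mul_div_assoc, div_self h1]
  ring

lemma comb (l : List (Finset Cand)) (p q r s : Finset Cand → ℚ) :
    ((l.map p).sum + (l.map q).sum) - ((l.map r).sum + (l.map s).sum)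
      = (l.map (fun A => (p A - r A) + (q A - s A))).sum := by
  induction l with
  | nil => simp
  | cons a t ih => simp only [List.map_cons, List.sum_cons]; linarith [ih]

end EAtom
namespace EAtom

lemma sum_phi (n : ℕ) : ∀ jj, 1 ≤ jj → ∀ κ, jj < κ → κ ≤ n + 1 →
    (((Fballots jj κ).map (phi n)).sum = deltaFn (jj + 1) (κ + 1)) ∧
    (((Fballots jj κ).map (phi n ∘ Finset.image swapAB)).sum = -deltaFn (jj + 1) (κ + 1)) := by
  intro jj
  induction jj with
  | zero => intro h; exact absurd h (by norm_num)
  | succ p ih =>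
    intro _ κ hκ hκn
    match p, ih with
    | 0, _ =>
      have h2 : 2 ≤ κ := hκ
      have c1 : ((κ - 1 : ℕ) : ℚ) = (κ : ℚ) - 1 := by
        have : (1:ℕ) ≤ κ := by omega
        push_cast [this]; ring
      have c2 : ((κ - 2 : ℕ) : ℚ) = (κ : ℚ) - 2 := by
        push_cast [h2]; ring
      constructor
      · show (phi n (Dset (κ-1) ∪ {Cand.a}) + (phi n (Dset (κ-2) ∪ {Cand.b}) + 0))
            = deltaFn (0 + 1 + 1) (κ + 1)
        rw [phi_a (show κ - 1 ≤ n by omega), phi_b (show κ - 2 ≤ n by omega)]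
        rw [show (0+1+1 : ℕ) = 2 from rfl, deltaFn_two κ h2, c1, c2]
        ring
      · show ((phi n ∘ Finset.image swapAB) (Dset (κ-1) ∪ {Cand.a})
            + ((phi n ∘ Finset.image swapAB) (Dset (κ-2) ∪ {Cand.b}) + 0))
            = -deltaFn (0 + 1 + 1) (κ + 1)
        show (phi n ((Dset (κ-1) ∪ {Cand.a}).image swapAB)
            + (phi n ((Dset (κ-2) ∪ {Cand.b}).image swapAB) + 0)) = _
        rw [image_swap_a, image_swap_b,
          phi_b (show κ - 1 ≤ n by omega), phi_a (show κ - 2 ≤ n by omega)]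
        rw [show (0+1+1 : ℕ) = 2 from rfl, deltaFn_two κ h2, c1, c2]
        ring
    | (q + 1), ih =>
      have hκ1 : κ - 1 + 1 = κ := by omega
      have IH1 := ih (by omega) κ (by omega) (by omega)
      have IH2 := ih (by omega) (κ - 1) (by omega) (by omega)
      have fcomp : (phi n ∘ Finset.image swapAB) ∘ Finset.image swapAB = phi n := by
        funext A; simp [Function.comp]
      have hF : Fballots (q + 1 + 1) κ
          = (Fballots (q + 1) κ).map (Finset.image swapAB) ++ Fballots (q + 1) (κ - 1) := rfl
      have hstep := deltaFn_step (q + 2) κ (by omega)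
      rw [hκ1] at IH2
      constructor
      · rw [hF, List.map_append, List.sum_append, List.map_map, IH1.2, IH2.1]
        rw [show q + 1 + 1 + 1 = q + 2 + 1 from rfl, hstep,
          show q + 1 + 1 = q + 2 from rfl]
        ring
      · rw [hF, List.map_append, List.sum_append, List.map_map, fcomp, IH1.1, IH2.2]
        rw [show q + 1 + 1 + 1 = q + 2 + 1 from rfl, hstep,
          show q + 1 + 1 = q + 2 from rfl]
        ring

end EAtom
namespace EAtom

lemma Fshape : ∀ jj, 1 ≤ jj → ∀ κ A, A ∈ Fballots jj κ →
    ∃ m, κ - 1 - jj ≤ m ∧ m ≤ κ - 1 ∧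
      (A = Dset m ∪ {Cand.a} ∨ A = Dset m ∪ {Cand.b}) := by
  intro jj
  induction jj with
  | zero => intro h; exact absurd h (by norm_num)
  | succ p ih =>
    intro _ κ A hA
    match p, ih with
    | 0, _ =>
      have : A = Dset (κ - 1) ∪ {Cand.a} ∨ A = Dset (κ - 2) ∪ {Cand.b} := by
        simpa [Fballots] using hA
      rcases this with rfl | rfl
      · exact ⟨κ - 1, by omega, le_refl _, Or.inl rfl⟩
      · exact ⟨κ - 2, by omega, by omega, Or.inr rfl⟩
    | (q + 1), ih =>
      have hF : Fballots (q + 1 + 1) κ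
          = (Fballots (q + 1) κ).map (Finset.image swapAB) ++ Fballots (q + 1) (κ - 1) := rfl
      rw [hF, List.mem_append] at hA
      rcases hA with hA | hA
      · rw [List.mem_map] at hA
        obtain ⟨B, hB, rfl⟩ := hA
        obtain ⟨m, hm1, hm2, hB3⟩ := ih (by omega) κ B hB
        rcases hB3 with rfl | rfl
        · exact ⟨m, by omega, hm2, Or.inr (image_swap_a m)⟩
        · exact ⟨m, by omega, hm2, Or.inl (image_swap_b m)⟩
      · obtain ⟨m, hm1, hm2, hB3⟩ := ih (by omega) (κ - 1) A hA
        exact ⟨m, by omega, by omega, hB3⟩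

end EAtom

open EAtom

/-- For `2 ≤ j < k`, in the election `E(j,k)` the committee
`W = D_{k−2} ∪ {x, a}` satisfies (1) `Δ(W,a,b) = δ(j,k)` and (2) every voter approves at
least `k − (j+1)` members of `W`. -/
theorem E_atomgroup (j k : ℕ) (hj : 2 ≤ j) (hjk : j < k) :
    pavDeltaL (Eballots j k) (Dset (k - 2) ∪ {Cand.x, Cand.a}) Cand.a Cand.b
      = deltaFn j k ∧
    ∀ A ∈ Eballots j k,
      k - (j + 1) ≤ (A ∩ (Dset (k - 2) ∪ {Cand.x, Cand.a})).card := by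
  constructor
  · rw [pavDeltaL]
    have e0 : insert Cand.b ((Dset (k - 2) ∪ {Cand.x, Cand.a}).erase Cand.a)
        = Wb (k - 2) := Wb_eq (k - 2)
    rw [e0]
    show pavscL (Eballots j k) (Wb (k - 2)) - pavscL (Eballots j k) (Wa (k - 2)) = deltaFn j k
    have hp : ∀ W : Finset Cand, pavscL (Eballots j k) W
        = ((Fballots (j - 1) (k - 1)).map
            (fun A => harm ((insert Cand.x (A.image swapAB) ∩ W).card))).sum
        + ((Fballots (j - 1) (k - 1)).map
            (fun A => harm ((insert Cand.y A ∩ W).card))).sum := by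
      intro W
      rw [show pavscL (Eballots j k) W
          = ((Eballots j k).map (fun A => harm ((A ∩ W).card))).sum from rfl,
        Eballots, List.map_append, List.sum_append, List.map_map, List.map_map]
      rfl
    rw [hp, hp, comb]
    have hphi : (fun A : Finset Cand =>
        (harm ((insert Cand.x (A.image swapAB) ∩ Wb (k - 2)).card)
          - harm ((insert Cand.x (A.image swapAB) ∩ Wa (k - 2)).card))
        + (harm ((insert Cand.y A ∩ Wb (k - 2)).card)
          - harm ((insert Cand.y A ∩ Wa (k - 2)).card))) = phi (k - 2) := by
      funext A; rw [phi]
    rw [hphi]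
    have hs := (sum_phi (k - 2) (j - 1) (by omega) (k - 1) (by omega) (by omega)).1
    rw [show j - 1 + 1 = j by omega, show k - 1 + 1 = k by omega] at hs
    exact hs
  · intro A hA
    rw [Eballots, List.mem_append, List.mem_map, List.mem_map] at hA
    rcases hA with ⟨B, hB, rfl⟩ | ⟨B, hB, rfl⟩ <;>
      obtain ⟨m, hm1, hm2, hsh⟩ := Fshape (j - 1) (by omega) (k - 1) B hB <;>
      have hmn : m ≤ k - 2 := by omega
    · rcases hsh with rfl | rfl
      · show k - (j + 1) ≤ ((insert Cand.x ((Dset m ∪ {Cand.a}).image swapAB)) ∩ Wa (k - 2)).card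
        rw [image_swap_a, I1 hmn, cxD]
        omega
      · show k - (j + 1) ≤ ((insert Cand.x ((Dset m ∪ {Cand.b}).image swapAB)) ∩ Wa (k - 2)).card
        rw [image_swap_b, I5 hmn, cxaD]
        omega
    · rcases hsh with rfl | rfl
      · show k - (j + 1) ≤ ((insert Cand.y (Dset m ∪ {Cand.a})) ∩ Wa (k - 2)).card
        rw [I3 hmn, caD]
        omega
      · show k - (j + 1) ≤ ((insert Cand.y (Dset m ∪ {Cand.b})) ∩ Wa (k - 2)).card
        rw [I7 hmn, cD]
        omega
end

section
/- Let k be an integer and set k₁ = ⌈log₂ k⌉, k₂ = k − k₁, and t = 2·⌈k/2⌉. For all sufficiently large k and every integer i with 2 ≤ i ≤ k₁, one has δ(2k₁ − 2(i−1), k₂ + 1) > t · δ(2k₁ − 2(i−2), k₂ + 1). -/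
lemma prod_pos' (j m : ℕ) (h : j < m) :
    0 < ∏ j' ∈ Finset.range (j + 1), ((m : ℚ) - (j' : ℚ)) := by
  apply Finset.prod_pos
  intro j' hj'
  have hj'' : j' < m := lt_of_le_of_lt (Nat.lt_succ_iff.mp (Finset.mem_range.mp hj')) h
  have : (j' : ℚ) < (m : ℚ) := by exact_mod_cast hj''
  linarith

lemma key (a m t : ℕ) (h : a + 2 < m)
    (ht : (t : ℚ) * ((a : ℚ) + 1) * ((a : ℚ) + 2)
        < ((m : ℚ) - (a : ℚ) - 1) * ((m : ℚ) - (a : ℚ) - 2)) :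
    (t : ℚ) * deltaFn (a + 2) m < deltaFn a m := by
  have hP : 0 < ∏ j' ∈ Finset.range (a + 1), ((m : ℚ) - (j' : ℚ)) := prod_pos' a m (by omega)
  have hX : (0 : ℚ) < (m : ℚ) - (a : ℚ) - 1 := by
    have : (a : ℚ) + 2 < (m : ℚ) := by exact_mod_cast h
    linarith
  have hY : (0 : ℚ) < (m : ℚ) - (a : ℚ) - 2 := by
    have : (a : ℚ) + 2 < (m : ℚ) := by exact_mod_cast h
    linarith
  have hprod : ∏ j' ∈ Finset.range (a + 2 + 1), ((m : ℚ) - (j' : ℚ))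
      = (∏ j' ∈ Finset.range (a + 1), ((m : ℚ) - (j' : ℚ)))
        * (((m : ℚ) - (a : ℚ) - 1) * ((m : ℚ) - (a : ℚ) - 2)) := by
    rw [Finset.prod_range_succ, Finset.prod_range_succ]
    push_cast
    ring
  have hfac : (Nat.factorial (a + 2) : ℚ)
      = ((a : ℚ) + 2) * ((a : ℚ) + 1) * (Nat.factorial a : ℚ) := by
    have : Nat.factorial (a + 2) = (a + 2) * ((a + 1) * Nat.factorial a) := by
      rw [Nat.factorial_succ, Nat.factorial_succ]
    rw [this]; push_cast; ring
  have hFa : (0 : ℚ) < (Nat.factorial a : ℚ) := by exact_mod_cast Nat.factorial_pos a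
  unfold deltaFn
  rw [hprod, hfac]
  rw [mul_div_assoc' (t : ℚ)]
  rw [div_lt_div_iff₀ (by positivity) hP]
  nlinarith [mul_lt_mul_of_pos_right ht (mul_pos hFa hP)]

lemma pow_bound : ∀ c : ℕ, 16 ≤ c → 100 * c ^ 2 ≤ 2 ^ (c - 1) := by
  intro c hc
  induction c, hc using Nat.le_induction with
  | base => norm_num
  | succ n hn ih =>
    have h2 : (2 : ℕ) ^ (n + 1 - 1) = 2 * 2 ^ (n - 1) := by
      have h1 : n + 1 - 1 = (n - 1) + 1 := by omega
      rw [h1, pow_succ, Nat.mul_comm]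
    calc 100 * (n + 1) ^ 2 ≤ 2 * (100 * n ^ 2) := by nlinarith
      _ ≤ 2 * 2 ^ (n - 1) := by omega
      _ = 2 ^ (n + 1 - 1) := h2.symm

/-- With `k₁ = ⌈log₂ k⌉`, `k₂ = k − k₁` and `t = 2·⌈k/2⌉`: for all
sufficiently large `k` and every `i` with `2 ≤ i ≤ k₁`,
`δ(2k₁ − 2(i−1), k₂+1) > t · δ(2k₁ − 2(i−2), k₂+1)`. -/
theorem deltaFn_gain :
    ∃ K : ℕ, ∀ k : ℕ, K ≤ k →
      ∀ i : ℕ, 2 ≤ i → i ≤ Nat.clog 2 k →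
        ((2 * ((k + 1) / 2) : ℕ) : ℚ) *
            deltaFn (2 * Nat.clog 2 k - 2 * (i - 2)) (k - Nat.clog 2 k + 1)
          < deltaFn (2 * Nat.clog 2 k - 2 * (i - 1)) (k - Nat.clog 2 k + 1) := by
  refine ⟨2 ^ 16, fun k hk i hi2 hik => ?_⟩
  set c := Nat.clog 2 k with hc
  have hc16 : 16 ≤ c := by
    have := Nat.clog_mono_right 2 hk
    rwa [Nat.clog_pow 2 16 (by norm_num)] at this
  have hk1 : 1 < k := by
    have : (1:ℕ) < 2 ^ 16 := by norm_num
    omega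
  have hklt : 2 ^ (c - 1) < k := Nat.pow_pred_clog_lt_self (by norm_num) hk1
  have hck : 100 * c ^ 2 < k := lt_of_le_of_lt (pow_bound c hc16) hklt
  have h4c : 4 * c ≤ k := by nlinarith
  have hic : i ≤ c := hik
  have hrw : 2 * c - 2 * (i - 2) = (2 * c - 2 * (i - 1)) + 2 := by omega
  rw [hrw]
  set a := 2 * c - 2 * (i - 1) with ha
  have haa : a + 2 ≤ 2 * c := by omega
  set m := k - c + 1 with hm
  have hm2 : a + 2 < m := by omega
  have hcast : (m : ℚ) = (k : ℚ) - (c : ℚ) + 1 := by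
    rw [hm]
    push_cast [Nat.cast_sub (by omega : c ≤ k)]
    ring
  apply key a m _ hm2
  -- the numeric inequality
  set t := 2 * ((k + 1) / 2) with htdef
  have htk : t ≤ k + 1 := by omega
  have hTQ : (t : ℚ) ≤ (k : ℚ) + 1 := by exact_mod_cast htk
  have hAQ : (a : ℚ) + 2 ≤ 2 * (c : ℚ) := by exact_mod_cast haa
  have hCQ : 100 * (c : ℚ) ^ 2 + 1 ≤ (k : ℚ) := by exact_mod_cast hck
  have hC16 : (16 : ℚ) ≤ (c : ℚ) := by exact_mod_cast hc16
  have hA0 : (0 : ℚ) ≤ (a : ℚ) := Nat.cast_nonneg a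
  have hT0 : (0 : ℚ) ≤ (t : ℚ) := Nat.cast_nonneg t
  rw [hcast]
  have hK0 : (0 : ℚ) ≤ (k : ℚ) := Nat.cast_nonneg k
  nlinarith [mul_nonneg (by linarith : (0:ℚ) ≤ (k:ℚ) - 100 * (c:ℚ)^2) hK0,
    mul_nonneg (mul_nonneg hA0 hA0) hK0, sq_nonneg ((c:ℚ)),
    mul_nonneg hA0 hK0, mul_nonneg hT0 hA0,
    mul_le_mul hTQ hAQ (by linarith) (by linarith)]
end

section
/- Let k ≥ 4, t = ⌊k/4⌋, and let E be the warm-up election defined in the context. For committees of the form W = D_{k−2} ∪ {c_{1,i}, c_{2,j}}: (i) if j is odd and i ≤ t, then Δ(W, c_{1,i}, c_{1,i+1}) = 1/2; and (ii) if j is even and 1 < i ≤ t+1, then Δ(W, c_{1,i}, c_{1,i−1}) = 1/2. -/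
/-- Candidates of the warm-up election: `c1 i = c_{1,i}`, `c2 j = c_{2,j}`, and
dummy candidates `d i`. -/
inductive WCand : Type
  | c1 : ℕ → WCand
  | c2 : ℕ → WCand
  | d : ℕ → WCand
  deriving DecidableEq

/-- The set `D_ℓ = {d_1, …, d_ℓ}` of dummy candidates. -/
def WD (ℓ : ℕ) : Finset WCand := (Finset.Icc 1 ℓ).image WCand.d

/-- Ballot of voter `v_{1,i}`: `{c_{1,i+1},…,c_{1,t+1}} ∪ {c_{2,j} : j ∈ [k], j even}`. -/
def ballotV1 (k t i : ℕ) : Finset WCand :=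
  (Finset.Icc (i + 1) (t + 1)).image WCand.c1 ∪
    ((Finset.Icc 1 k).filter (fun j => j % 2 = 0)).image WCand.c2

/-- Ballot of voter `v_{2,i}`: `{c_{1,1},…,c_{1,i}} ∪ {c_{2,j} : j ∈ [k], j odd}`. -/
def ballotV2 (k i : ℕ) : Finset WCand :=
  (Finset.Icc 1 i).image WCand.c1 ∪
    ((Finset.Icc 1 k).filter (fun j => j % 2 = 1)).image WCand.c2

/-- Ballot of the voters in `S_j`: `{c_{2,j},…,c_{2,k}}`. -/
def ballotS (k j : ℕ) : Finset WCand := (Finset.Icc j k).image WCand.c2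

/-- The ballots of the warm-up election for committee size `k` (with `t = ⌊k/4⌋`):
voters `v_{1,1},…,v_{1,t}`, voters `v_{2,1},…,v_{2,t}`, `t` voters in each of
`S_1,…,S_k`, and `⌊k²/4 − k/2⌋` voters in `U` approving exactly `D_{k−2}`. -/
def warmBallots (k : ℕ) : List (Finset WCand) :=
  ((List.range (k / 4)).map fun i0 => ballotV1 k (k / 4) (i0 + 1)) ++
  ((List.range (k / 4)).map fun i0 => ballotV2 k (i0 + 1)) ++
  ((List.range k).flatMap fun j0 => List.replicate (k / 4) (ballotS k (j0 + 1))) ++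
  List.replicate ((k * k - 2 * k) / 4) (WD (k - 2))

def Hq (n : ℕ) : ℚ := ∑ j ∈ Finset.range n, (1:ℚ)/(j+1)

lemma Hq0 : Hq 0 = 0 := by simp [Hq]
lemma Hq1 : Hq 1 = 1 := by simp [Hq]
lemma Hq2 : Hq 2 = 3/2 := by simp [Hq, Finset.sum_range_succ]; norm_num

lemma sum_map_sub (l : List (Finset WCand)) (f g : Finset WCand → ℚ) :
    (l.map f).sum - (l.map g).sum = (l.map (fun A => f A - g A)).sum := by
  induction l with
  | nil => simp
  | cons A l ih => simp only [List.map_cons, List.sum_cons, ← ih]; ring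

lemma list_range_map_sum (n : ℕ) (f : ℕ → ℚ) :
    ((List.range n).map f).sum = ∑ m ∈ Finset.range n, f m := by
  induction n with
  | zero => simp
  | succ n ih => rw [List.range_succ, Finset.sum_range_succ]; simp [ih]

lemma committee_swap (ℓ i j i' : ℕ) :
    insert (WCand.c1 i') ((WD ℓ ∪ {WCand.c1 i, WCand.c2 j}).erase (WCand.c1 i))
      = WD ℓ ∪ {WCand.c1 i', WCand.c2 j} := by
  ext z
  simp only [Finset.mem_insert, Finset.mem_erase, Finset.mem_union, WD,
    Finset.mem_image, Finset.mem_Icc, Finset.mem_singleton]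
  cases z <;> aesop

lemma card_inter_noD (A : Finset WCand) (hA : ∀ m, WCand.d m ∉ A) (ℓ : ℕ) (x y : WCand)
    (hxy : x ≠ y) :
    (A ∩ (WD ℓ ∪ {x, y})).card = (if x ∈ A then 1 else 0) + (if y ∈ A then 1 else 0) := by
  have h1 : A ∩ (WD ℓ ∪ {x, y}) = A ∩ {x, y} := by
    ext z
    simp only [Finset.mem_inter, Finset.mem_union, WD, Finset.mem_image, Finset.mem_Icc]
    cases z <;> aesop
  rw [h1, Finset.inter_comm, ← Finset.filter_mem_eq_inter]
  rw [show ({x, y} : Finset WCand) = insert x {y} from rfl]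
  rw [Finset.filter_insert, Finset.filter_singleton]
  split_ifs <;> simp_all [Finset.card_insert_of_notMem]

lemma c1_mem_V1 (k t m a : ℕ) : WCand.c1 a ∈ ballotV1 k t m ↔ m + 1 ≤ a ∧ a ≤ t + 1 := by
  simp [ballotV1]
lemma c2_mem_V1 (k t m b : ℕ) : WCand.c2 b ∈ ballotV1 k t m ↔ (1 ≤ b ∧ b ≤ k) ∧ b % 2 = 0 := by
  simp [ballotV1]
lemma d_notMem_V1 (k t m n : ℕ) : WCand.d n ∉ ballotV1 k t m := by simp [ballotV1]
lemma c1_mem_V2 (k m a : ℕ) : WCand.c1 a ∈ ballotV2 k m ↔ 1 ≤ a ∧ a ≤ m := by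
  simp [ballotV2]
lemma c2_mem_V2 (k m b : ℕ) : WCand.c2 b ∈ ballotV2 k m ↔ (1 ≤ b ∧ b ≤ k) ∧ b % 2 = 1 := by
  simp [ballotV2]
lemma d_notMem_V2 (k m n : ℕ) : WCand.d n ∉ ballotV2 k m := by simp [ballotV2]
lemma c1_notMem_S (k m a : ℕ) : WCand.c1 a ∉ ballotS k m := by simp [ballotS]
lemma d_notMem_S (k m n : ℕ) : WCand.d n ∉ ballotS k m := by simp [ballotS]

lemma c1_ne_c2 (a b : ℕ) : WCand.c1 a ≠ WCand.c2 b := by simp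

lemma pavDelta_eq (ballots : List (Finset WCand)) (W : Finset WCand) (a b : WCand) :
    pavDeltaL ballots W a b =
      (ballots.map (fun A =>
        Hq ((A ∩ insert b (W.erase a)).card) - Hq ((A ∩ W).card))).sum := by
  rw [pavDeltaL]
  rw [show pavscL ballots (insert b (W.erase a)) =
    (ballots.map (fun A => Hq ((A ∩ insert b (W.erase a)).card))).sum from rfl]
  rw [show pavscL ballots W = (ballots.map (fun A => Hq ((A ∩ W).card))).sum from rfl]
  exact sum_map_sub _ _ _

lemma delta_sum (k i j i' : ℕ) :
    pavDeltaL (warmBallots k) (WD (k-2) ∪ {WCand.c1 i, WCand.c2 j}) (WCand.c1 i) (WCand.c1 i') =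
    (∑ m ∈ Finset.range (k/4),
      (Hq ((if m+2 ≤ i' ∧ i' ≤ k/4+1 then 1 else 0) +
            (if (1 ≤ j ∧ j ≤ k) ∧ j % 2 = 0 then 1 else 0))
       - Hq ((if m+2 ≤ i ∧ i ≤ k/4+1 then 1 else 0) +
            (if (1 ≤ j ∧ j ≤ k) ∧ j % 2 = 0 then 1 else 0))))
    + (∑ m ∈ Finset.range (k/4),
      (Hq ((if 1 ≤ i' ∧ i' ≤ m+1 then 1 else 0) +
            (if (1 ≤ j ∧ j ≤ k) ∧ j % 2 = 1 then 1 else 0))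
       - Hq ((if 1 ≤ i ∧ i ≤ m+1 then 1 else 0) +
            (if (1 ≤ j ∧ j ≤ k) ∧ j % 2 = 1 then 1 else 0)))) := by
  rw [pavDelta_eq, committee_swap]
  rw [warmBallots]
  rw [List.map_append, List.map_append, List.map_append,
      List.sum_append, List.sum_append, List.sum_append]
  have hS : ((((List.range k).flatMap fun j0 => List.replicate (k / 4) (ballotS k (j0 + 1)))).map
      (fun A => Hq ((A ∩ (WD (k-2) ∪ {WCand.c1 i', WCand.c2 j})).card)
        - Hq ((A ∩ (WD (k-2) ∪ {WCand.c1 i, WCand.c2 j})).card))).sum = 0 := by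
    apply List.sum_eq_zero
    intro x hx
    simp only [List.mem_map, List.mem_flatMap, List.eq_of_mem_replicate] at hx
    obtain ⟨A, ⟨j0, _, hA⟩, rfl⟩ := hx
    have hA' := List.eq_of_mem_replicate hA
    subst hA'
    rw [card_inter_noD _ (d_notMem_S k _) _ _ _ (c1_ne_c2 _ _),
        card_inter_noD _ (d_notMem_S k _) _ _ _ (c1_ne_c2 _ _)]
    rw [if_neg (c1_notMem_S k _ _), if_neg (c1_notMem_S k _ _)]
    ring
  have hU : ((List.replicate ((k * k - 2 * k) / 4) (WD (k - 2))).map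
      (fun A => Hq ((A ∩ (WD (k-2) ∪ {WCand.c1 i', WCand.c2 j})).card)
        - Hq ((A ∩ (WD (k-2) ∪ {WCand.c1 i, WCand.c2 j})).card))).sum = 0 := by
    apply List.sum_eq_zero
    intro x hx
    simp only [List.mem_map, List.eq_of_mem_replicate] at hx
    obtain ⟨A, hA, rfl⟩ := hx
    have hA' := List.eq_of_mem_replicate hA
    subst hA'
    rw [Finset.inter_eq_left.2 Finset.subset_union_left,
        Finset.inter_eq_left.2 Finset.subset_union_left]
    ring
  rw [hS, hU, add_zero, add_zero]
  congr 1
  · rw [List.map_map, list_range_map_sum]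
    apply Finset.sum_congr rfl
    intro m _
    simp only [Function.comp]
    rw [card_inter_noD _ (d_notMem_V1 k (k/4) (m+1)) _ _ _ (c1_ne_c2 _ _),
        card_inter_noD _ (d_notMem_V1 k (k/4) (m+1)) _ _ _ (c1_ne_c2 _ _)]
    simp only [c1_mem_V1, c2_mem_V1]
  · rw [List.map_map, list_range_map_sum]
    apply Finset.sum_congr rfl
    intro m _
    simp only [Function.comp]
    rw [card_inter_noD _ (d_notMem_V2 k (m+1)) _ _ _ (c1_ne_c2 _ _),
        card_inter_noD _ (d_notMem_V2 k (m+1)) _ _ _ (c1_ne_c2 _ _)]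
    simp only [c1_mem_V2, c2_mem_V2]


/-- Let `k ≥ 4` and `t = ⌊k/4⌋`. In the warm-up election, for
committees `W = D_{k−2} ∪ {c_{1,i}, c_{2,j}}`:
(i) if `j` is odd and `i ≤ t`, then `Δ(W, c_{1,i}, c_{1,i+1}) = 1/2`; and
(ii) if `j` is even and `1 < i ≤ t+1`, then `Δ(W, c_{1,i}, c_{1,i−1}) = 1/2`. -/
theorem warmup_claims_i_ii (k : ℕ) (hk : 4 ≤ k) :
    (∀ i j : ℕ, 1 ≤ i → i ≤ k / 4 → 1 ≤ j → j ≤ k → j % 2 = 1 →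
      pavDeltaL (warmBallots k) (WD (k - 2) ∪ {WCand.c1 i, WCand.c2 j})
        (WCand.c1 i) (WCand.c1 (i + 1)) = 1 / 2) ∧
    (∀ i j : ℕ, 1 < i → i ≤ k / 4 + 1 → 1 ≤ j → j ≤ k → j % 2 = 0 →
      pavDeltaL (warmBallots k) (WD (k - 2) ∪ {WCand.c1 i, WCand.c2 j})
        (WCand.c1 i) (WCand.c1 (i - 1)) = 1 / 2) := by
  constructor
  · intro i j hi1 hit hj1 hjk hjo
    have hcE : ¬((1 ≤ j ∧ j ≤ k) ∧ j % 2 = 0) := by omega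
    have hcO : (1 ≤ j ∧ j ≤ k) ∧ j % 2 = 1 := ⟨⟨hj1, hjk⟩, hjo⟩
    have e1 : (∑ m ∈ Finset.range (k/4),
        (Hq ((if m+2 ≤ i+1 ∧ i+1 ≤ k/4+1 then 1 else 0) +
              (if (1 ≤ j ∧ j ≤ k) ∧ j % 2 = 0 then 1 else 0))
         - Hq ((if m+2 ≤ i ∧ i ≤ k/4+1 then 1 else 0) +
              (if (1 ≤ j ∧ j ≤ k) ∧ j % 2 = 0 then 1 else 0)))) = 1 := by
      rw [Finset.sum_congr rfl (g := fun m => if m = i - 1 then (1:ℚ) else 0) ?_]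
      · rw [Finset.sum_ite_eq' (Finset.range (k/4)) (i-1) (fun _ => (1:ℚ))]
        rw [if_pos (by simp only [Finset.mem_range]; omega)]
      · intro m hm
        beta_reduce
        simp only [Finset.mem_range] at hm
        rw [if_neg hcE]
        by_cases h1 : m+2 ≤ i+1 ∧ i+1 ≤ k/4+1
        · by_cases h2 : m+2 ≤ i ∧ i ≤ k/4+1
          · rw [if_pos h1, if_pos h2, if_neg (by omega)]; ring
          · rw [if_pos h1, if_neg h2, if_pos (by omega)]; norm_num [Hq1, Hq0]
        · by_cases h2 : m+2 ≤ i ∧ i ≤ k/4+1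
          · exact absurd h2 (by omega)
          · rw [if_neg h1, if_neg h2, if_neg (by omega)]; ring
    have e2 : (∑ m ∈ Finset.range (k/4),
        (Hq ((if 1 ≤ i+1 ∧ i+1 ≤ m+1 then 1 else 0) +
              (if (1 ≤ j ∧ j ≤ k) ∧ j % 2 = 1 then 1 else 0))
         - Hq ((if 1 ≤ i ∧ i ≤ m+1 then 1 else 0) +
              (if (1 ≤ j ∧ j ≤ k) ∧ j % 2 = 1 then 1 else 0)))) = -(1/2) := by
      rw [Finset.sum_congr rfl (g := fun m => if m = i - 1 then (-(1/2):ℚ) else 0) ?_]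
      · rw [Finset.sum_ite_eq' (Finset.range (k/4)) (i-1) (fun _ => (-(1/2):ℚ))]
        rw [if_pos (by simp only [Finset.mem_range]; omega)]
      · intro m hm
        beta_reduce
        simp only [Finset.mem_range] at hm
        rw [if_pos hcO]
        by_cases h1 : 1 ≤ i+1 ∧ i+1 ≤ m+1
        · by_cases h2 : 1 ≤ i ∧ i ≤ m+1
          · rw [if_pos h1, if_pos h2, if_neg (by omega)]; ring
          · exact absurd (⟨by omega, by omega⟩ : 1 ≤ i ∧ i ≤ m+1) h2
        · by_cases h2 : 1 ≤ i ∧ i ≤ m+1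
          · rw [if_neg h1, if_pos h2, if_pos (by omega)]; norm_num [Hq1, Hq2]
          · rw [if_neg h1, if_neg h2, if_neg (by omega)]; ring
    rw [delta_sum, e1, e2]
    norm_num
  · intro i j hi1 hit hj1 hjk hje
    have hcE : (1 ≤ j ∧ j ≤ k) ∧ j % 2 = 0 := ⟨⟨hj1, hjk⟩, hje⟩
    have hcO : ¬((1 ≤ j ∧ j ≤ k) ∧ j % 2 = 1) := by omega
    have e1 : (∑ m ∈ Finset.range (k/4),
        (Hq ((if m+2 ≤ i-1 ∧ i-1 ≤ k/4+1 then 1 else 0) +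
              (if (1 ≤ j ∧ j ≤ k) ∧ j % 2 = 0 then 1 else 0))
         - Hq ((if m+2 ≤ i ∧ i ≤ k/4+1 then 1 else 0) +
              (if (1 ≤ j ∧ j ≤ k) ∧ j % 2 = 0 then 1 else 0)))) = -(1/2) := by
      rw [Finset.sum_congr rfl (g := fun m => if m = i - 2 then (-(1/2):ℚ) else 0) ?_]
      · rw [Finset.sum_ite_eq' (Finset.range (k/4)) (i-2) (fun _ => (-(1/2):ℚ))]
        rw [if_pos (by simp only [Finset.mem_range]; omega)]
      · intro m hm
        beta_reduce
        simp only [Finset.mem_range] at hm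
        rw [if_pos hcE]
        by_cases h1 : m+2 ≤ i-1 ∧ i-1 ≤ k/4+1
        · by_cases h2 : m+2 ≤ i ∧ i ≤ k/4+1
          · rw [if_pos h1, if_pos h2, if_neg (by omega)]; ring
          · exact absurd (⟨by omega, by omega⟩ : m+2 ≤ i ∧ i ≤ k/4+1) h2
        · by_cases h2 : m+2 ≤ i ∧ i ≤ k/4+1
          · rw [if_neg h1, if_pos h2, if_pos (by omega)]; norm_num [Hq1, Hq2]
          · rw [if_neg h1, if_neg h2, if_neg (by omega)]; ring
    have e2 : (∑ m ∈ Finset.range (k/4),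
        (Hq ((if 1 ≤ i-1 ∧ i-1 ≤ m+1 then 1 else 0) +
              (if (1 ≤ j ∧ j ≤ k) ∧ j % 2 = 1 then 1 else 0))
         - Hq ((if 1 ≤ i ∧ i ≤ m+1 then 1 else 0) +
              (if (1 ≤ j ∧ j ≤ k) ∧ j % 2 = 1 then 1 else 0)))) = 1 := by
      rw [Finset.sum_congr rfl (g := fun m => if m = i - 2 then (1:ℚ) else 0) ?_]
      · rw [Finset.sum_ite_eq' (Finset.range (k/4)) (i-2) (fun _ => (1:ℚ))]
        rw [if_pos (by simp only [Finset.mem_range]; omega)]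
      · intro m hm
        beta_reduce
        simp only [Finset.mem_range] at hm
        rw [if_neg hcO]
        by_cases h1 : 1 ≤ i-1 ∧ i-1 ≤ m+1
        · by_cases h2 : 1 ≤ i ∧ i ≤ m+1
          · rw [if_pos h1, if_pos h2, if_neg (by omega)]; ring
          · rw [if_pos h1, if_neg h2, if_pos (by omega)]; norm_num [Hq1, Hq0]
        · by_cases h2 : 1 ≤ i ∧ i ≤ m+1
          · exact absurd h1 (by omega)
          · rw [if_neg h1, if_neg h2, if_neg (by omega)]; ring
    rw [delta_sum, e1, e2]
    norm_num
end

section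
/- Let k ≥ 4, t = ⌊k/4⌋, and let E be the warm-up election defined in the context. Then: (iii) for the committee W = D_{k−2} ∪ {c_{1,t+1}, c_{2,j}} with j < k odd, Δ(W, c_{2,j}, c_{2,j+1}) = t/2 ≥ 1/2; and (iv) for the committee W = D_{k−2} ∪ {c_{1,1}, c_{2,j}} with j < k even, Δ(W, c_{2,j}, c_{2,j+1}) ≥ 1/2. -/
def hsum (n : ℕ) : ℚ := ∑ j ∈ Finset.range n, (1 : ℚ) / (j + 1)

lemma pavscL_nil {C : Type*} [DecidableEq C] (W : Finset C) : pavscL [] W = 0 := rfl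

lemma pavscL_cons {C : Type*} [DecidableEq C] (A : Finset C) (l : List (Finset C)) (W : Finset C) :
    pavscL (A :: l) W = hsum ((A ∩ W).card) + pavscL l W := rfl

lemma pavscL_append {C : Type*} [DecidableEq C] (l1 l2 : List (Finset C)) (W : Finset C) :
    pavscL (l1 ++ l2) W = pavscL l1 W + pavscL l2 W := by
  simp [pavscL]

lemma pavscL_replicate {C : Type*} [DecidableEq C] (n : ℕ) (A W : Finset C) :
    pavscL (List.replicate n A) W = n * hsum ((A ∩ W).card) := by
  induction n with
  | zero => simp [pavscL_nil]
  | succ n ih => rw [List.replicate_succ, pavscL_cons, ih]; push_cast; ring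

lemma pavscL_map_range {C : Type*} [DecidableEq C] (n : ℕ) (g : ℕ → Finset C) (W : Finset C) :
    pavscL ((List.range n).map g) W = ∑ i ∈ Finset.range n, hsum ((g i ∩ W).card) := by
  induction n with
  | zero => simp [pavscL_nil]
  | succ n ih =>
      rw [List.range_succ, List.map_append, pavscL_append, ih, Finset.sum_range_succ]
      simp [pavscL_cons, pavscL_nil]

lemma pavscL_flatMap_range {C : Type*} [DecidableEq C] (n : ℕ) (g : ℕ → List (Finset C))
    (W : Finset C) :
    pavscL ((List.range n).flatMap g) W = ∑ i ∈ Finset.range n, pavscL (g i) W := by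
  induction n with
  | zero => simp [pavscL_nil]
  | succ n ih =>
      rw [List.range_succ, List.flatMap_append, pavscL_append, ih, Finset.sum_range_succ]
      simp [pavscL_append, pavscL_nil]

lemma warm_core (k j m a b c d : ℕ) (hk : 4 ≤ k) (hjk : j < k)
    (hV1W : ∀ i0 < k / 4,
      ((ballotV1 k (k / 4) (i0 + 1)) ∩
        (WD (k - 2) ∪ {WCand.c1 m, WCand.c2 j})).card = a)
    (hV1W' : ∀ i0 < k / 4,
      ((ballotV1 k (k / 4) (i0 + 1)) ∩
        insert (WCand.c2 (j + 1))
          ((WD (k - 2) ∪ {WCand.c1 m, WCand.c2 j}).erase (WCand.c2 j))).card = b)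
    (hV2W : ∀ i0 < k / 4,
      ((ballotV2 k (i0 + 1)) ∩ (WD (k - 2) ∪ {WCand.c1 m, WCand.c2 j})).card = c)
    (hV2W' : ∀ i0 < k / 4,
      ((ballotV2 k (i0 + 1)) ∩
        insert (WCand.c2 (j + 1))
          ((WD (k - 2) ∪ {WCand.c1 m, WCand.c2 j}).erase (WCand.c2 j))).card = d) :
    pavDeltaL (warmBallots k) (WD (k - 2) ∪ {WCand.c1 m, WCand.c2 j})
      (WCand.c2 j) (WCand.c2 (j + 1))
    = (k / 4 : ℕ) * ((hsum b - hsum a) + (hsum d - hsum c) + 1) := by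
  set t := k / 4 with ht
  set W : Finset WCand := WD (k - 2) ∪ {WCand.c1 m, WCand.c2 j} with hW
  set W' : Finset WCand := insert (WCand.c2 (j + 1)) (W.erase (WCand.c2 j)) with hW'
  -- S-ballot intersection cards
  have hSW : ∀ j0, ((ballotS k (j0 + 1)) ∩ W).card = if j0 < j then 1 else 0 := by
    intro j0
    by_cases h : j0 < j
    · rw [if_pos h]
      have : (ballotS k (j0 + 1)) ∩ W = {WCand.c2 j} := by
        ext x
        rcases x with mm | mm | mm <;>
          simp [ballotS, hW, WD, Finset.mem_union, Finset.mem_image, Finset.mem_Icc,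
            Finset.mem_insert] <;> omega
      rw [this, Finset.card_singleton]
    · rw [if_neg h]
      have : (ballotS k (j0 + 1)) ∩ W = ∅ := by
        ext x
        rcases x with mm | mm | mm <;>
          simp [ballotS, hW, WD, Finset.mem_union, Finset.mem_image, Finset.mem_Icc,
            Finset.mem_insert] <;> omega
      rw [this, Finset.card_empty]
  have hSW' : ∀ j0, ((ballotS k (j0 + 1)) ∩ W').card = if j0 ≤ j then 1 else 0 := by
    intro j0
    by_cases h : j0 ≤ j
    · rw [if_pos h]
      have : (ballotS k (j0 + 1)) ∩ W' = {WCand.c2 (j + 1)} := by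
        ext x
        rcases x with mm | mm | mm <;>
          simp [ballotS, hW', hW, WD, Finset.mem_union, Finset.mem_image, Finset.mem_Icc,
            Finset.mem_insert, Finset.mem_erase] <;> omega
      rw [this, Finset.card_singleton]
    · rw [if_neg h]
      have : (ballotS k (j0 + 1)) ∩ W' = ∅ := by
        ext x
        rcases x with mm | mm | mm <;>
          simp [ballotS, hW', hW, WD, Finset.mem_union, Finset.mem_image, Finset.mem_Icc,
            Finset.mem_insert, Finset.mem_erase] <;> omega
      rw [this, Finset.card_empty]
  -- dummy ballot intersections
  have hDW : WD (k - 2) ∩ W = WD (k - 2) := by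
    rw [Finset.inter_eq_left]; exact Finset.subset_union_left
  have hDW' : WD (k - 2) ∩ W' = WD (k - 2) := by
    rw [Finset.inter_eq_left]
    intro x hx
    have hx' : x ∈ W := Finset.subset_union_left hx
    have hxd : x ≠ WCand.c2 j := by
      simp only [WD, Finset.mem_image, Finset.mem_Icc] at hx
      obtain ⟨n, hn, rfl⟩ := hx
      simp
    rw [hW']
    exact Finset.mem_insert_of_mem (Finset.mem_erase.mpr ⟨hxd, hx'⟩)
  -- expand
  rw [pavDeltaL, ← hW', warmBallots]
  rw [pavscL_append, pavscL_append, pavscL_append, pavscL_append, pavscL_append, pavscL_append]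
  rw [pavscL_map_range, pavscL_map_range, pavscL_map_range, pavscL_map_range,
    pavscL_flatMap_range, pavscL_flatMap_range, pavscL_replicate, pavscL_replicate]
  rw [hDW, hDW']
  have e1 : ∑ i0 ∈ Finset.range t, hsum ((ballotV1 k t (i0 + 1) ∩ W).card)
      = t * hsum a := by
    rw [Finset.sum_congr rfl fun i0 hi0 => by rw [hV1W i0 (Finset.mem_range.mp hi0)]]
    simp [mul_comm]
  have e1' : ∑ i0 ∈ Finset.range t, hsum ((ballotV1 k t (i0 + 1) ∩ W').card)
      = t * hsum b := by
    rw [Finset.sum_congr rfl fun i0 hi0 => by rw [hV1W' i0 (Finset.mem_range.mp hi0)]]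
    simp [mul_comm]
  have e2 : ∑ i0 ∈ Finset.range t, hsum ((ballotV2 k (i0 + 1) ∩ W).card)
      = t * hsum c := by
    rw [Finset.sum_congr rfl fun i0 hi0 => by rw [hV2W i0 (Finset.mem_range.mp hi0)]]
    simp [mul_comm]
  have e2' : ∑ i0 ∈ Finset.range t, hsum ((ballotV2 k (i0 + 1) ∩ W').card)
      = t * hsum d := by
    rw [Finset.sum_congr rfl fun i0 hi0 => by rw [hV2W' i0 (Finset.mem_range.mp hi0)]]
    simp [mul_comm]
  have e3 : (∑ j0 ∈ Finset.range k, pavscL (List.replicate t (ballotS k (j0 + 1))) W')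
      - (∑ j0 ∈ Finset.range k, pavscL (List.replicate t (ballotS k (j0 + 1))) W)
      = t := by
    rw [← Finset.sum_sub_distrib]
    have hterm : ∀ j0 ∈ Finset.range k,
        pavscL (List.replicate t (ballotS k (j0 + 1))) W'
          - pavscL (List.replicate t (ballotS k (j0 + 1))) W
        = if j0 = j then (t : ℚ) else 0 := by
      intro j0 _
      rw [pavscL_replicate, pavscL_replicate, hSW' j0, hSW j0]
      by_cases h : j0 = j
      · subst h
        rw [if_pos (le_refl j0), if_neg (lt_irrefl j0), if_pos rfl]
        norm_num [hsum]
      · rw [if_neg h]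
        by_cases h2 : j0 < j
        · rw [if_pos h2, if_pos (le_of_lt h2)]; ring
        · rw [if_neg h2, if_neg fun hle => h (le_antisymm hle (not_lt.mp h2))]; ring
    rw [Finset.sum_congr rfl hterm, Finset.sum_ite_eq' (Finset.range k) j fun _ => (t : ℚ),
      if_pos (Finset.mem_range.mpr hjk)]
  rw [e1, e1', e2, e2']
  have := e3
  linarith [e3]

/-- Let `k ≥ 4` and `t = ⌊k/4⌋`. In the warm-up election:
(iii) for `W = D_{k−2} ∪ {c_{1,t+1}, c_{2,j}}` with `j < k` odd,
`Δ(W, c_{2,j}, c_{2,j+1}) = t/2 ≥ 1/2`; and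
(iv) for `W = D_{k−2} ∪ {c_{1,1}, c_{2,j}}` with `j < k` even,
`Δ(W, c_{2,j}, c_{2,j+1}) ≥ 1/2`. -/
theorem warmup_claims_iii_iv (k : ℕ) (hk : 4 ≤ k) :
    (∀ j : ℕ, 1 ≤ j → j < k → j % 2 = 1 →
      pavDeltaL (warmBallots k) (WD (k - 2) ∪ {WCand.c1 (k / 4 + 1), WCand.c2 j})
          (WCand.c2 j) (WCand.c2 (j + 1)) = ((k / 4 : ℕ) : ℚ) / 2 ∧
      (1 : ℚ) / 2 ≤ ((k / 4 : ℕ) : ℚ) / 2) ∧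
    (∀ j : ℕ, 1 ≤ j → j < k → j % 2 = 0 →
      (1 : ℚ) / 2 ≤
        pavDeltaL (warmBallots k) (WD (k - 2) ∪ {WCand.c1 1, WCand.c2 j})
          (WCand.c2 j) (WCand.c2 (j + 1))) := by
  have ht1 : 1 ≤ k / 4 := by omega
  have htQ : (1 : ℚ) ≤ ((k / 4 : ℕ) : ℚ) := by exact_mod_cast ht1
  constructor
  · intro j hj1 hjk hjo
    have key := warm_core k j (k / 4 + 1) 1 2 1 0 hk hjk
      (by
        intro i0 hi0
        have : ballotV1 k (k / 4) (i0 + 1) ∩ (WD (k - 2) ∪ {WCand.c1 (k / 4 + 1), WCand.c2 j})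
            = {WCand.c1 (k / 4 + 1)} := by
          ext x
          rcases x with mm | mm | mm <;>
            simp [ballotV1, WD, Finset.mem_union, Finset.mem_image, Finset.mem_Icc,
              Finset.mem_insert, Finset.mem_filter] <;> omega
        rw [this, Finset.card_singleton])
      (by
        intro i0 hi0
        have : ballotV1 k (k / 4) (i0 + 1) ∩
            insert (WCand.c2 (j + 1))
              ((WD (k - 2) ∪ {WCand.c1 (k / 4 + 1), WCand.c2 j}).erase (WCand.c2 j))
            = {WCand.c1 (k / 4 + 1), WCand.c2 (j + 1)} := by
          ext x
          rcases x with mm | mm | mm <;>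
            simp [ballotV1, WD, Finset.mem_union, Finset.mem_image, Finset.mem_Icc,
              Finset.mem_insert, Finset.mem_filter, Finset.mem_erase] <;> omega
        rw [this, Finset.card_pair (by simp)])
      (by
        intro i0 hi0
        have : ballotV2 k (i0 + 1) ∩ (WD (k - 2) ∪ {WCand.c1 (k / 4 + 1), WCand.c2 j})
            = {WCand.c2 j} := by
          ext x
          rcases x with mm | mm | mm <;>
            simp [ballotV2, WD, Finset.mem_union, Finset.mem_image, Finset.mem_Icc,
              Finset.mem_insert, Finset.mem_filter] <;> omega
        rw [this, Finset.card_singleton])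
      (by
        intro i0 hi0
        have : ballotV2 k (i0 + 1) ∩
            insert (WCand.c2 (j + 1))
              ((WD (k - 2) ∪ {WCand.c1 (k / 4 + 1), WCand.c2 j}).erase (WCand.c2 j))
            = ∅ := by
          ext x
          rcases x with mm | mm | mm <;>
            simp [ballotV2, WD, Finset.mem_union, Finset.mem_image, Finset.mem_Icc,
              Finset.mem_insert, Finset.mem_filter, Finset.mem_erase] <;> omega
        rw [this, Finset.card_empty])
    rw [key]
    have h0 : hsum 0 = 0 := by norm_num [hsum]
    have h1 : hsum 1 = 1 := by norm_num [hsum]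
    have h2 : hsum 2 = 3 / 2 := by norm_num [hsum, Finset.sum_range_succ]
    rw [h0, h1, h2]
    constructor
    · ring
    · linarith
  · intro j hj1 hjk hje
    have key := warm_core k j 1 1 0 1 2 hk hjk
      (by
        intro i0 hi0
        have : ballotV1 k (k / 4) (i0 + 1) ∩ (WD (k - 2) ∪ {WCand.c1 1, WCand.c2 j})
            = {WCand.c2 j} := by
          ext x
          rcases x with mm | mm | mm <;>
            simp [ballotV1, WD, Finset.mem_union, Finset.mem_image, Finset.mem_Icc,
              Finset.mem_insert, Finset.mem_filter] <;> omega
        rw [this, Finset.card_singleton])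
      (by
        intro i0 hi0
        have : ballotV1 k (k / 4) (i0 + 1) ∩
            insert (WCand.c2 (j + 1))
              ((WD (k - 2) ∪ {WCand.c1 1, WCand.c2 j}).erase (WCand.c2 j))
            = ∅ := by
          ext x
          rcases x with mm | mm | mm <;>
            simp [ballotV1, WD, Finset.mem_union, Finset.mem_image, Finset.mem_Icc,
              Finset.mem_insert, Finset.mem_filter, Finset.mem_erase] <;> omega
        rw [this, Finset.card_empty])
      (by
        intro i0 hi0
        have : ballotV2 k (i0 + 1) ∩ (WD (k - 2) ∪ {WCand.c1 1, WCand.c2 j})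
            = {WCand.c1 1} := by
          ext x
          rcases x with mm | mm | mm <;>
            simp [ballotV2, WD, Finset.mem_union, Finset.mem_image, Finset.mem_Icc,
              Finset.mem_insert, Finset.mem_filter] <;> omega
        rw [this, Finset.card_singleton])
      (by
        intro i0 hi0
        have : ballotV2 k (i0 + 1) ∩
            insert (WCand.c2 (j + 1))
              ((WD (k - 2) ∪ {WCand.c1 1, WCand.c2 j}).erase (WCand.c2 j))
            = {WCand.c1 1, WCand.c2 (j + 1)} := by
          ext x
          rcases x with mm | mm | mm <;>
            simp [ballotV2, WD, Finset.mem_union, Finset.mem_image, Finset.mem_Icc,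
              Finset.mem_insert, Finset.mem_filter, Finset.mem_erase] <;> omega
        rw [this, Finset.card_pair (by simp)])
    rw [key]
    have h0 : hsum 0 = 0 := by norm_num [hsum]
    have h1 : hsum 1 = 1 := by norm_num [hsum]
    have h2 : hsum 2 = 3 / 2 := by norm_num [hsum, Finset.sum_range_succ]
    rw [h0, h1, h2]
    have hr : ((k / 4 : ℕ) : ℚ) * ((0 - 1) + (3 / 2 - 1) + 1) = ((k / 4 : ℕ) : ℚ) / 2 := by ring
    rw [hr]
    linarith
end
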